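/- arXiv:1701.05943 — 8 statements merged into one kernel-verified Lean document; each statement's English description precedes it below -/
import Mathlib

section
/- Let c ∈ ℝ, let π be a pdf on ℝ that is ASU(c), and let d be a distortion function. Then for every ê ∈ ℝ, ∫_ℝ d(e − c) π(e) de ≤ ∫_ℝ d(e − ê) π(e) de (integrals taken in [0, ∞] against Lebesgue measure); that is, the point c attains the infimum inf_{ê ∈ ℝ} ∫_ℝ d(e − ê) π(e) de. -/
open MeasureTheory Set
open scoped ENNReal NNReal

noncomputable section

/-- A probability density function on ℝ: measurable, nonnegative (via `ℝ≥0`),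
integrating to one against Lebesgue measure. -/
def IsPdf (f : ℝ → ℝ≥0) : Prop :=
  Measurable f ∧ ∫⁻ x, (f x : ℝ≥0∞) = 1

/-- `f` is symmetric and unimodal about `c`. -/
def ASU (c : ℝ) (f : ℝ → ℝ≥0) : Prop :=
  (∀ x, f (c - x) = f (c + x)) ∧ MonotoneOn f (Iic c) ∧ AntitoneOn f (Ici c)

/-- A distortion function: measurable, even, nondecreasing on `[0, ∞)`. -/
def IsDistortion (d : ℝ → ℝ≥0∞) : Prop :=
  Measurable d ∧ (∀ x, d (-x) = d x) ∧ MonotoneOn d (Ici (0 : ℝ))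

theorem volume_setOf_ofReal_lt_inter_Ioi (v : ℝ≥0∞) :
    volume ({t : ℝ | ENNReal.ofReal t < v} ∩ Ioi 0) = v := by
  rcases eq_or_ne v ⊤ with rfl | hv
  · simp
  · have : {t : ℝ | ENNReal.ofReal t < v} ∩ Ioi 0 = Ioo 0 v.toReal := by
      ext t
      simp only [mem_inter_iff, mem_ofPred_eq, mem_Ioi, mem_Ioo]
      exact ⟨fun h => ⟨h.2, (ENNReal.ofReal_lt_iff_lt_toReal h.2.le hv).mp h.1⟩,
        fun h => ⟨(ENNReal.ofReal_lt_iff_lt_toReal h.1.le hv).mpr h.2, h.1⟩⟩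
    rw [this, Real.volume_Ioo, sub_zero, ENNReal.ofReal_toReal hv]

theorem lintegral_eq_lintegral_measure_ofReal_lt {α : Type*} [MeasurableSpace α]
    (μ : Measure α) [SFinite μ] {f : α → ℝ≥0∞} (hf : Measurable f) :
    ∫⁻ x, f x ∂μ = ∫⁻ t in Ioi 0, μ {x | ENNReal.ofReal t < f x} := by
  set W := {p : α × ℝ | ENNReal.ofReal p.2 < f p.1}
  have hW : MeasurableSet W :=
    measurableSet_lt (ENNReal.measurable_ofReal.comp measurable_snd) (hf.comp measurable_fst)
  have hsection (x : α) : ∫⁻ t in Ioi 0, W.indicator 1 (x, t) = f x := by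
    rw [← volume_setOf_ofReal_lt_inter_Ioi (f x), ← Measure.restrict_apply' measurableSet_Ioi]
    exact lintegral_indicator_one (measurable_prodMk_left hW)
  calc ∫⁻ x, f x ∂μ = ∫⁻ x, (∫⁻ t in Ioi 0, W.indicator 1 (x, t)) ∂μ := by simp_rw [hsection]
    _ = ∫⁻ t in Ioi (0 : ℝ), ∫⁻ x, W.indicator 1 (x, t) ∂μ :=
      lintegral_lintegral_swap (f := fun x t => W.indicator 1 (x, t))
        (measurable_one.indicator hW).aemeasurable
    _ = ∫⁻ t in Ioi 0, μ {x | ENNReal.ofReal t < f x} := by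
      congr! 2 with t
      exact lintegral_indicator_one (measurable_prodMk_right hW)

theorem lintegral_mul_eq_lintegral_setLIntegral {α : Type*} [MeasurableSpace α]
    (μ : Measure α) [SFinite μ] {f g : α → ℝ≥0∞} (hf : Measurable f) (hg : Measurable g) :
    ∫⁻ x, f x * g x ∂μ = ∫⁻ t in Ioi 0, ∫⁻ x in {x | ENNReal.ofReal t < f x}, g x ∂μ := by
  simp_rw [mul_comm (f _), ← Pi.mul_apply g f, ← lintegral_withDensity_eq_lintegral_mul μ hg hf,
    lintegral_eq_lintegral_measure_ofReal_lt _ hf,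
    withDensity_apply _ (measurableSet_lt measurable_const hf)]

namespace LatticeOrderedAddCommGroup

theorem IsSolid.subset_or_subset {α : Type*} [AddCommGroup α] [LinearOrder α] {S K : Set α}
    (hS : IsSolid S) (hK : IsSolid K) : S ⊆ K ∨ K ⊆ S := by
  by_contra! h
  obtain ⟨⟨x, hxS, hxK⟩, ⟨y, hyK, hyS⟩⟩ := And.intro (not_subset.mp h.1) (not_subset.mp h.2)
  rcases le_total |x| |y| with hxy | hyx
  · exact hxK (hK hyK hxy)
  · exact hyS (hS hxS hyx)

theorem IsSolid.volume_inter_preimage_add_le {S K : Set ℝ} (hS : IsSolid S) (hK : IsSolid K)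
    (u : ℝ) : volume (S ∩ (· + u) ⁻¹' K) ≤ volume (S ∩ K) := by
  rcases hS.subset_or_subset hK with hSK | hKS
  · rw [inter_eq_left.mpr hSK]
    exact measure_mono inter_subset_left
  · rw [inter_eq_right.mpr hKS]
    exact (measure_mono inter_subset_right).trans (measure_preimage_add_right volume u K).le

end LatticeOrderedAddCommGroup

open LatticeOrderedAddCommGroup

theorem ASU.le_of_abs_le {c : ℝ} {f : ℝ → ℝ≥0} (hf : ASU c f) {x y : ℝ} (hxy : |y| ≤ |x|) :
    f (x + c) ≤ f (y + c) := by
  obtain ⟨hsym, -, hanti⟩ := hf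
  have habs (z : ℝ) : f (z + c) = f (|z| + c) := by
    rcases abs_choice z with hz | hz <;> rw [hz]
    rw [add_comm (-z), ← sub_eq_add_neg, hsym, add_comm]
  rw [habs x, habs y]
  exact hanti (by simp) (by simp) (by linarith)

theorem IsDistortion.le_of_abs_le {d : ℝ → ℝ≥0∞} (hd : IsDistortion d) {x y : ℝ}
    (hxy : |y| ≤ |x|) : d y ≤ d x := by
  obtain ⟨-, heven, hmono⟩ := hd
  have habs (z : ℝ) : d z = d |z| := by
    rcases abs_choice z with hz | hz <;> rw [hz]
    rw [heven]
  rw [habs x, habs y]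
  exact hmono (abs_nonneg y) (abs_nonneg x) hxy

theorem setLIntegral_comp_add_le {p : ℝ → ℝ≥0∞} (hp : Measurable p)
    (hp_abs : ∀ x y, |y| ≤ |x| → p x ≤ p y) {S : Set ℝ} (hS : IsSolid S) (hSm : MeasurableSet S)
    (u : ℝ) :
    ∫⁻ x in S, p (x + u) ≤ ∫⁻ x in S, p x := by
  rw [lintegral_eq_lintegral_measure_ofReal_lt _ (f := fun x => p (x + u))
      (hp.comp (measurable_add_const u)), lintegral_eq_lintegral_measure_ofReal_lt _ hp]
  refine lintegral_mono fun t => ?_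
  have hK : IsSolid {x | ENNReal.ofReal t < p x} := fun x hx y hxy => hx.trans_le (hp_abs x y hxy)
  simp only [Measure.restrict_apply' hSm, inter_comm _ S]
  exact hS.volume_inter_preimage_add_le hK u

theorem setLIntegral_le_setLIntegral_comp_add {p : ℝ → ℝ≥0∞} (hp : Measurable p)
    (hp_abs : ∀ x y, |y| ≤ |x| → p x ≤ p y) (hp_fin : ∫⁻ x, p x ≠ ⊤) {U : Set ℝ}
    (hU : IsSolid Uᶜ) (hUm : MeasurableSet U) (u : ℝ) :
    ∫⁻ x in U, p x ≤ ∫⁻ x in U, p (x + u) := by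
  have htotal : ∫⁻ x, p (x + u) = ∫⁻ x, p x := lintegral_add_right_eq_self p u
  have hcompl_fin : ∫⁻ x in Uᶜ, p (x + u) ≠ ⊤ :=
    ne_top_of_le_ne_top (htotal ▸ hp_fin) (setLIntegral_le_lintegral _ _)
  refine (ENNReal.add_le_add_iff_right hcompl_fin).mp ?_
  calc (∫⁻ x in U, p x) + ∫⁻ x in Uᶜ, p (x + u)
      ≤ (∫⁻ x in U, p x) + ∫⁻ x in Uᶜ, p x :=
        add_le_add_right (setLIntegral_comp_add_le hp hp_abs hU hUm.compl u) _
    _ = (∫⁻ x in U, p (x + u)) + ∫⁻ x in Uᶜ, p (x + u) := by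
        rw [lintegral_add_compl _ hUm, lintegral_add_compl _ hUm, htotal]

/-- Property 1: for an ASU(c) pdf `π` and distortion `d`, the center `c` minimizes
the expected distortion, hence attains the infimum. -/
theorem stmt0 (c : ℝ) (π : ℝ → ℝ≥0) (d : ℝ → ℝ≥0∞)
    (hπ : IsPdf π) (hA : ASU c π) (hd : IsDistortion d) :
    (∀ ehat : ℝ, ∫⁻ e, d (e - c) * (π e : ℝ≥0∞) ≤ ∫⁻ e, d (e - ehat) * (π e : ℝ≥0∞)) ∧
    (∫⁻ e, d (e - c) * (π e : ℝ≥0∞)) = ⨅ ehat : ℝ, ∫⁻ e, d (e - ehat) * (π e : ℝ≥0∞) := by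
  obtain ⟨hπm, hπ1⟩ := hπ
  have hshift (b : ℝ) : ∫⁻ e, d (e - b) * (π e : ℝ≥0∞) = ∫⁻ x, d x * (π (x + b) : ℝ≥0∞) := by
    simpa only [add_sub_cancel_right] using
      (lintegral_add_right_eq_self (fun e => d (e - b) * (π e : ℝ≥0∞)) b).symm
  have hmass : ∫⁻ x, (π (x + c) : ℝ≥0∞) ≠ ⊤ := by
    rw [lintegral_add_right_eq_self (fun x => (π x : ℝ≥0∞)) c, hπ1]
    exact ENNReal.one_ne_top
  have hπb (b : ℝ) : Measurable fun x => (π (x + b) : ℝ≥0∞) :=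
    (hπm.comp (measurable_add_const b)).coe_nnreal_ennreal
  have hcenter_le (a : ℝ) :
      ∫⁻ e, d (e - c) * (π e : ℝ≥0∞) ≤ ∫⁻ e, d (e - a) * (π e : ℝ≥0∞) := by
    rw [hshift, hshift, lintegral_mul_eq_lintegral_setLIntegral _ hd.1 (hπb c),
      lintegral_mul_eq_lintegral_setLIntegral _ hd.1 (hπb a)]
    refine lintegral_mono fun t => ?_
    have hsub : IsSolid {x | ENNReal.ofReal t < d x}ᶜ := fun x hx y hxy => by
      simp only [mem_compl_iff, mem_ofPred_eq, not_lt] at hx ⊢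
      exact (hd.le_of_abs_le hxy).trans hx
    simpa only [add_assoc, sub_add_cancel] using
      setLIntegral_le_setLIntegral_comp_add (hπb c)
        (fun x y hxy => ENNReal.coe_le_coe.mpr (hA.le_of_abs_le hxy))
        hmass hsub (measurableSet_lt measurable_const hd.1) (a - c)
  exact ⟨hcenter_le, le_antisymm (le_iInf hcenter_le) (iInf_le _ c)⟩
end
end

section
/- Let π be a pdf on ℝ that is ASU(0), and let k ∈ (0, ∞] be such that p := ∫_{|x| < k} π(x) dx > 0. Then the function x ↦ 1[|x| < k] · π(x)/p is a pdf on ℝ and is ASU(0). -/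
open MeasureTheory Set
open scoped ENNReal NNReal

noncomputable section

/-- Property 2 (main case): conditioning an ASU(0) pdf on the no-transmission event
`{|x| < k}` of a threshold prescription (with `k ∈ (0,∞]` and positive probability `p`)
yields a pdf that is again ASU(0). -/
theorem stmt1 (π : ℝ → ℝ≥0) (hπ : IsPdf π) (hA : ASU 0 π)
    (k : ℝ≥0∞) (hk : 0 < k)
    (p : ℝ≥0∞) (hp : p = ∫⁻ x in {x : ℝ | ENNReal.ofReal |x| < k}, (π x : ℝ≥0∞))
    (hp0 : 0 < p) :
    IsPdf (fun x => if ENNReal.ofReal |x| < k then π x / p.toNNReal else 0) ∧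
    ASU 0 (fun x => if ENNReal.ofReal |x| < k then π x / p.toNNReal else 0) := by
  obtain ⟨hmeas, hint⟩ := hπ
  obtain ⟨hsym, hmono, hanti⟩ := hA
  have hS : MeasurableSet {x : ℝ | ENNReal.ofReal |x| < k} := by
    exact (ENNReal.measurable_ofReal.comp continuous_abs.measurable) measurableSet_Iio
  have hple : p ≤ 1 := by
    rw [hp, ← hint]
    exact setLIntegral_le_lintegral _ _
  have hptop : p ≠ ⊤ := ne_top_of_le_ne_top ENNReal.one_ne_top hple
  have hcoe : ((p.toNNReal : ℝ≥0∞)) = p := ENNReal.coe_toNNReal hptop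
  have hc0 : p.toNNReal ≠ 0 := by
    simp [ENNReal.toNNReal_eq_zero_iff, hp0.ne', hptop]
  refine ⟨⟨?_, ?_⟩, ?_, ?_, ?_⟩
  · exact Measurable.ite hS (hmeas.div_const _) measurable_const
  · have heq : (fun x : ℝ => ((if ENNReal.ofReal |x| < k then π x / p.toNNReal else 0 : ℝ≥0) : ℝ≥0∞))
        = {x : ℝ | ENNReal.ofReal |x| < k}.indicator (fun x => (π x : ℝ≥0∞) * p⁻¹) := by
      funext x
      by_cases h : ENNReal.ofReal |x| < k
      · simp only [h, if_true, indicator, mem_setOf_eq]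
        rw [div_eq_mul_inv, ENNReal.coe_mul, ENNReal.coe_inv hc0, hcoe]
      · simp [h, indicator, mem_setOf_eq]
    rw [heq, lintegral_indicator hS,
      lintegral_mul_const' _ _ (by simp [hp0.ne']), ← hp,
      ENNReal.mul_inv_cancel hp0.ne' hptop]
  · intro x
    simp [abs_neg, zero_sub, zero_add, show π (-x) = π x by
      have := hsym x; simpa using this]
  · intro x hx y hy hxy
    simp only
    have habs : |y| ≤ |x| := by
      rw [abs_of_nonpos (mem_Iic.mp hy), abs_of_nonpos (mem_Iic.mp hx)]; linarith
    by_cases h : ENNReal.ofReal |x| < k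
    · have h' : ENNReal.ofReal |y| < k := lt_of_le_of_lt (ENNReal.ofReal_le_ofReal habs) h
      simp only [h, h', if_true]
      rw [div_eq_mul_inv, div_eq_mul_inv]
      exact mul_le_mul_left (hmono hx hy hxy) _
    · simp [h]
  · intro x hx y hy hxy
    simp only
    have habs : |x| ≤ |y| := by
      rw [abs_of_nonneg (mem_Ici.mp hx), abs_of_nonneg (mem_Ici.mp hy)]; linarith
    by_cases h : ENNReal.ofReal |y| < k
    · have h' : ENNReal.ofReal |x| < k := lt_of_le_of_lt (ENNReal.ofReal_le_ofReal habs) h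
      simp only [h, h', if_true]
      rw [div_eq_mul_inv, div_eq_mul_inv]
      exact mul_le_mul_left (hanti hx hy hxy) _
    · simp [h]
end
end

section
/- Let π and μ be pdfs on ℝ, both ASU(0), and let a ∈ ℝ with a ≠ 0. Define π̃(x) := (1/|a|) π(x/a). Then the convolution (π̃ ⋆ μ)(x) = ∫_ℝ π̃(x − w) μ(w) dw is a pdf on ℝ and is ASU(0). -/
/-! Call `f` symmetric decreasing if `f t ≤ f s` whenever `|s| ≤ |t|`; for `c = 0` this is
ASU(0). The density of `aE + W` is the convolution of the rescaled density `π̃` with `μ`, and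
both rescaling and convolution preserve total mass. Convolution of symmetric decreasing functions
is symmetric decreasing: for `|x| ≤ |y|` write `x = c - h`, `y = c + h`, so that `c h ≥ 0`;
averaging over `t ↦ -t` gives
`2 ((f ⋆ g) x - (f ⋆ g) y) = ∫ (f (c - t) - f (c + t)) (g (t - h) - g (t + h)) dt`,
and for every `t` the two factors have the same sign. -/

open MeasureTheory Set
open scoped ENNReal NNReal

noncomputable section

/-- A pdf allowed to take values in `[0,∞]`. -/
def IsPdfE (f : ℝ → ℝ≥0∞) : Prop :=
  Measurable f ∧ ∫⁻ x, f x = 1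

/-- Symmetric and unimodal about `c`, for `[0,∞]`-valued functions. -/
def ASUE (c : ℝ) (f : ℝ → ℝ≥0∞) : Prop :=
  (∀ x, f (c - x) = f (c + x)) ∧ MonotoneOn f (Iic c) ∧ AntitoneOn f (Ici c)

def IsSymmDecreasing {α : Type*} [Preorder α] (f : ℝ → α) : Prop :=
  ∀ ⦃s t : ℝ⦄, |s| ≤ |t| → f t ≤ f s

theorem ASU.isSymmDecreasing {f : ℝ → ℝ≥0} (hf : ASU 0 f) : IsSymmDecreasing f := by
  have habs (x : ℝ) : f |x| = f x := by
    rcases abs_choice x with h | h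
    · rw [h]
    · simpa [h] using hf.1 x
  intro s t hst
  rw [← habs s, ← habs t]
  exact hf.2.2 (abs_nonneg s) ((abs_nonneg s).trans hst) hst

theorem CanonicallyOrderedAdd.mul_add_mul_le_mul_add_mul {R : Type*} [CommSemiring R]
    [PartialOrder R] [CanonicallyOrderedAdd R] {a b c d : R} (hab : a ≤ b) (hcd : c ≤ d) :
    a * d + b * c ≤ a * c + b * d := by
  obtain ⟨b, rfl⟩ := exists_add_of_le hab
  obtain ⟨d, rfl⟩ := exists_add_of_le hcd
  calc a * (c + d) + (a + b) * c ≤ a * (c + d) + (a + b) * c + b * d := le_self_add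
    _ = a * c + (a + b) * (c + d) := by ring

theorem abs_sub_le_abs_add_iff {a b : ℝ} : |a - b| ≤ |a + b| ↔ 0 ≤ a * b := by
  rw [← sq_le_sq]
  constructor <;> intro h <;> nlinarith

theorem abs_add_le_abs_sub_iff {a b : ℝ} : |a + b| ≤ |a - b| ↔ a * b ≤ 0 := by
  rw [← sq_le_sq]
  constructor <;> intro h <;> nlinarith

theorem mul_nonneg_and_mul_nonneg_or_of_mul_nonneg {a b t : ℝ} (hab : 0 ≤ a * b) :
    (0 ≤ a * t ∧ 0 ≤ t * b) ∨ (a * t ≤ 0 ∧ t * b ≤ 0) := by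
  rcases mul_nonneg_iff.1 hab with ⟨ha, hb⟩ | ⟨ha, hb⟩ <;> rcases le_total 0 t with ht | ht
  · exact .inl ⟨mul_nonneg ha ht, mul_nonneg ht hb⟩
  · exact .inr ⟨mul_nonpos_of_nonneg_of_nonpos ha ht, mul_nonpos_of_nonpos_of_nonneg ht hb⟩
  · exact .inr ⟨mul_nonpos_of_nonpos_of_nonneg ha ht, mul_nonpos_of_nonneg_of_nonpos ht hb⟩
  · exact .inl ⟨mul_nonneg_of_nonpos_of_nonpos ha ht, mul_nonneg_of_nonpos_of_nonpos ht hb⟩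

section Convolution

variable {G : Type*} [MeasurableSpace G] [AddGroup G] [MeasurableAdd₂ G] [MeasurableNeg G]
  {μ : Measure G} [μ.IsAddLeftInvariant] [SFinite μ]

theorem lintegral_lconvolution {f g : G → ℝ≥0∞} (hf : Measurable f) (hg : Measurable g) :
    ∫⁻ x, (f ⋆ₗ[μ] g) x ∂μ = (∫⁻ x, f x ∂μ) * ∫⁻ x, g x ∂μ := by
  simp only [lconvolution_def]
  rw [lintegral_lintegral_swap (by fun_prop), ← lintegral_mul_const _ hf]
  refine lintegral_congr fun y => ?_
  rw [lintegral_const_mul _ (by fun_prop), lintegral_add_left_eq_self g (-y)]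

end Convolution

theorem lintegral_add_comp_neg {f : ℝ → ℝ≥0∞} (hf : Measurable f) :
    ∫⁻ t, (f t + f (-t)) = 2 * ∫⁻ t, f t := by
  rw [lintegral_add_left hf, lintegral_neg_eq_self, two_mul]

theorem lconvolution_add_eq (f g : ℝ → ℝ≥0∞) (c s : ℝ) :
    (f ⋆ₗ g) (c + s) = ∫⁻ t, f (c - t) * g (t + s) := by
  rw [lconvolution_def, ← lintegral_sub_left_eq_self _ c]
  refine lintegral_congr fun t => ?_
  congr 2
  ring

theorem Real.lintegral_comp_div {f : ℝ → ℝ≥0∞} (hf : Measurable f) {a : ℝ} (ha : a ≠ 0) :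
    ∫⁻ x, f (x / a) = ENNReal.ofReal |a| * ∫⁻ x, f x := by
  simp only [div_eq_mul_inv]
  rw [← lintegral_map hf (measurable_mul_const a⁻¹), Real.map_volume_mul_right (inv_ne_zero ha),
    lintegral_smul_measure, inv_inv, smul_eq_mul]

theorem IsPdf.lintegral_rescale {π : ℝ → ℝ≥0} (hπ : IsPdf π) {a : ℝ} (ha : a ≠ 0) :
    ∫⁻ u, ENNReal.ofReal (1 / |a|) * (π (u / a) : ℝ≥0∞) = 1 := by
  rw [lintegral_const_mul _ (f := fun u => (π (u / a) : ℝ≥0∞))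
      (hπ.1.coe_nnreal_ennreal.comp (measurable_div_const a)),
    Real.lintegral_comp_div hπ.1.coe_nnreal_ennreal ha, hπ.2, mul_one,
    ← ENNReal.ofReal_mul (by positivity), one_div, inv_mul_cancel₀ (abs_ne_zero.mpr ha),
    ENNReal.ofReal_one]

namespace IsSymmDecreasing

theorem comp_neg {α : Type*} [PartialOrder α] {f : ℝ → α} (hf : IsSymmDecreasing f)
    (x : ℝ) : f (-x) = f x :=
  le_antisymm (hf (abs_neg x).ge) (hf (abs_neg x).le)

theorem comp_div {α : Type*} [Preorder α] {f : ℝ → α} (hf : IsSymmDecreasing f)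
    (a : ℝ) : IsSymmDecreasing fun x => f (x / a) := by
  intro s t hst
  apply hf
  rw [abs_div, abs_div]
  exact div_le_div_of_nonneg_right hst (abs_nonneg a)

theorem asue {g : ℝ → ℝ≥0∞} (hg : IsSymmDecreasing g) : ASUE 0 g := by
  refine ⟨fun x => ?_, fun x hx y hy hxy => hg ?_, fun x hx y hy hxy => hg ?_⟩
  · rw [zero_sub, zero_add, hg.comp_neg]
  · rw [abs_of_nonpos hy, abs_of_nonpos (hxy.trans hy)]; linarith
  · rw [abs_of_nonneg hx, abs_of_nonneg hy]; exact hxy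

theorem mul_add_mul_le {f g : ℝ → ℝ≥0∞} (hf : IsSymmDecreasing f) (hg : IsSymmDecreasing g)
    {c h : ℝ} (hch : 0 ≤ c * h) (t : ℝ) :
    f (c - t) * g (t + h) + f (c + t) * g (t - h) ≤
      f (c - t) * g (t - h) + f (c + t) * g (t + h) := by
  rcases mul_nonneg_and_mul_nonneg_or_of_mul_nonneg (t := t) hch with ⟨hct, hth⟩ | ⟨hct, hth⟩
  · exact (add_comm _ _).trans_le <| (CanonicallyOrderedAdd.mul_add_mul_le_mul_add_mul
      (hf (abs_sub_le_abs_add_iff.2 hct)) (hg (abs_sub_le_abs_add_iff.2 hth))).trans_eq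
      (add_comm _ _)
  · exact CanonicallyOrderedAdd.mul_add_mul_le_mul_add_mul
      (hf (abs_add_le_abs_sub_iff.2 hct)) (hg (abs_add_le_abs_sub_iff.2 hth))

theorem lconvolution {f g : ℝ → ℝ≥0∞} (hf : IsSymmDecreasing f) (hg : IsSymmDecreasing g)
    (hfm : Measurable f) (hgm : Measurable g) : IsSymmDecreasing (f ⋆ₗ g) := by
  intro x y hxy
  set c := (x + y) / 2
  set h := (y - x) / 2
  have hch : 0 ≤ c * h := by
    have := sq_le_sq.2 hxy
    simp only [c, h]
    nlinarith
  have htwice (s : ℝ) : 2 * (f ⋆ₗ g) (c + s) =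
      ∫⁻ t, (f (c - t) * g (t + s) + f (c + t) * g (t - s)) := by
    rw [lconvolution_add_eq, ← lintegral_add_comp_neg (by fun_prop)]
    refine lintegral_congr fun t => ?_
    rw [sub_neg_eq_add, ← hg.comp_neg (-t + s), neg_add, neg_neg, ← sub_eq_add_neg]
  have hx : x = c + -h := by simp only [c, h]; ring
  have hy : y = c + h := by simp only [c, h]; ring
  rw [← ENNReal.mul_le_mul_iff_right two_ne_zero ENNReal.ofNat_ne_top, hx, hy, htwice, htwice]
  simpa only [← sub_eq_add_neg, sub_neg_eq_add] using lintegral_mono (mul_add_mul_le hf hg hch)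

end IsSymmDecreasing

/-- Property 3: with `π̃(x) = (1/|a|) π(x/a)`, the convolution `π̃ ⋆ μ` of ASU(0) pdfs
is a pdf and is ASU(0). -/
theorem stmt2 (π μ : ℝ → ℝ≥0) (a : ℝ) (ha : a ≠ 0)
    (hπ : IsPdf π) (hπA : ASU 0 π) (hμ : IsPdf μ) (hμA : ASU 0 μ) :
    IsPdfE (fun x => ∫⁻ w,
      ENNReal.ofReal (1 / |a|) * (π ((x - w) / a) : ℝ≥0∞) * (μ w : ℝ≥0∞)) ∧
    ASUE 0 (fun x => ∫⁻ w,
      ENNReal.ofReal (1 / |a|) * (π ((x - w) / a) : ℝ≥0∞) * (μ w : ℝ≥0∞)) := by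
  have hconv : (fun x => ∫⁻ w,
      ENNReal.ofReal (1 / |a|) * (π ((x - w) / a) : ℝ≥0∞) * (μ w : ℝ≥0∞)) =
      (fun w => (μ w : ℝ≥0∞)) ⋆ₗ fun u => ENNReal.ofReal (1 / |a|) * (π (u / a) : ℝ≥0∞) := by
    ext x
    refine lintegral_congr fun w => ?_
    rw [mul_comm, neg_add_eq_sub]
  rw [hconv]
  set P : ℝ → ℝ≥0∞ := fun u => ENNReal.ofReal (1 / |a|) * (π (u / a) : ℝ≥0∞)
  set Q : ℝ → ℝ≥0∞ := fun w => (μ w : ℝ≥0∞)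
  have hPm : Measurable P :=
    measurable_const.mul (hπ.1.coe_nnreal_ennreal.comp (measurable_div_const a))
  have hQm : Measurable Q := hμ.1.coe_nnreal_ennreal
  have hP : IsSymmDecreasing P := fun s t hst => by
    simp only [P]
    gcongr
    exact_mod_cast hπA.isSymmDecreasing.comp_div a hst
  have hQ : IsSymmDecreasing Q := fun _ _ hst => ENNReal.coe_le_coe.2 (hμA.isSymmDecreasing hst)
  refine ⟨⟨measurable_lconvolution _ hQm hPm, ?_⟩, (hQ.lconvolution hP hQm hPm).asue⟩
  rw [lintegral_lconvolution hQm hPm, hμ.2, hπ.lintegral_rescale ha, one_mul]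
end
end

section
/- Let ξ and π be pdfs on ℝ with ξ ASU(0) and ξ ⪰_m π. Let φ : ℝ → {0, 1} be measurable, write B₀(φ) = {x ∈ ℝ : φ(x) = 0}, and suppose p := ∫_{B₀(φ)} π(x) dx > 0. Let k ∈ (0, ∞] satisfy ∫_{|x| < k} ξ(x) dx = p. Then the normalized restrictions ξ_θ(x) := 1[|x| < k] ξ(x)/p and π_φ(x) := 1[x ∈ B₀(φ)] π(x)/p are pdfs, ξ_θ is ASU(0), and ξ_θ ⪰_m π_φ. -/
/-!
Rearrangement commutes with division by a constant and preserves the integral (layer cake).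
For `ρ` inside the window, `π_φ ≤ π / p` gives `π_φ^σ ≤ π^σ / p`, while `ξ^σ / p ≤ ξ_θ^σ` because
the superlevel sets of the symmetric unimodal `ξ` are centred intervals, which the truncation
only cuts at radius `k`; together with `ξ ⪰_m π` this gives the inequality. For `ρ` outside
the window all of the mass `1` of `ξ_θ^σ` already lies in `(-ρ, ρ)`.
-/

open MeasureTheory Set
open scoped ENNReal NNReal

noncomputable section

/-- Symmetric decreasing rearrangement of an `ℝ≥0∞`-valued function:
`f^σ(x) = ∫_0^∞ 1[2|x| < vol{z : f z > ρ}] dρ`. -/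
def sdr (f : ℝ → ℝ≥0∞) (x : ℝ) : ℝ≥0∞ :=
  ∫⁻ ρ in Ioi (0 : ℝ),
    if ENNReal.ofReal (2 * |x|) < volume {z : ℝ | ENNReal.ofReal ρ < f z} then 1 else 0

/-- Symmetric decreasing rearrangement of an `ℝ≥0`-valued function. -/
def sdr' (f : ℝ → ℝ≥0) : ℝ → ℝ≥0∞ := sdr fun x => (f x : ℝ≥0∞)

/-- `ξ` majorizes `π`: `∫_{-ρ}^{ρ} ξ^σ ≥ ∫_{-ρ}^{ρ} π^σ` for all `ρ ≥ 0`. -/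
def Majorizes (ξ π : ℝ → ℝ≥0) : Prop :=
  ∀ ρ : ℝ, 0 ≤ ρ → ∫⁻ x in Ioo (-ρ) ρ, sdr' π x ≤ ∫⁻ x in Ioo (-ρ) ρ, sdr' ξ x


def superlevelVolume (f : ℝ → ℝ≥0) (t : ℝ) : ℝ≥0∞ :=
  volume {z : ℝ | ENNReal.ofReal t < (f z : ℝ≥0∞)}

lemma sdr'_eq_lintegral (f : ℝ → ℝ≥0) (x : ℝ) :
    sdr' f x = ∫⁻ t in Ioi (0 : ℝ),
      if ENNReal.ofReal (2 * |x|) < superlevelVolume f t then 1 else 0 := rfl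

lemma antitone_superlevelVolume (f : ℝ → ℝ≥0) : Antitone (superlevelVolume f) :=
  fun _ _ hst => measure_mono fun _ hz => (ENNReal.ofReal_le_ofReal hst).trans_lt hz

lemma measurable_superlevelVolume (f : ℝ → ℝ≥0) : Measurable (superlevelVolume f) :=
  (antitone_superlevelVolume f).measurable

lemma volume_setOf_ofReal_two_mul_abs_lt (c : ℝ≥0∞) :
    volume {x : ℝ | ENNReal.ofReal (2 * |x|) < c} = c := by
  rcases eq_or_ne c ∞ with rfl | hc
  · simp only [ENNReal.ofReal_lt_top, ofPred_true, Real.volume_univ]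
  lift c to ℝ≥0 using hc
  have hset : {x : ℝ | ENNReal.ofReal (2 * |x|) < c} = Ioo (-(c / 2 : ℝ)) (c / 2) := by
    ext x
    rw [mem_ofPred_eq, ← ENNReal.ofReal_coe_nnreal,
      ENNReal.ofReal_lt_ofReal_iff_of_nonneg (by positivity), mem_Ioo, ← abs_lt]
    constructor <;> intro <;> linarith
  rw [hset, Real.volume_Ioo, ← ENNReal.ofReal_coe_nnreal]
  ring_nf

lemma lintegral_ite_ofReal_two_mul_abs_lt (c : ℝ≥0∞) :
    ∫⁻ x : ℝ, (if ENNReal.ofReal (2 * |x|) < c then 1 else 0) = c := by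
  conv_rhs => rw [← volume_setOf_ofReal_two_mul_abs_lt c,
    ← lintegral_indicator_one (measurableSet_lt (by fun_prop) measurable_const)]
  simp only [indicator_apply, mem_ofPred_eq, Pi.one_apply]

lemma measurable_uncurry_sdr'_integrand (f : ℝ → ℝ≥0) :
    Measurable (Function.uncurry fun (x t : ℝ) =>
      if ENNReal.ofReal (2 * |x|) < superlevelVolume f t then (1 : ℝ≥0∞) else 0) :=
  Measurable.ite
    (measurableSet_lt (measurable_const.mul (measurable_abs.comp measurable_fst)).ennreal_ofReal
      ((measurable_superlevelVolume f).comp measurable_snd))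
    measurable_const measurable_const

lemma measurable_sdr' (f : ℝ → ℝ≥0) : Measurable (sdr' f) :=
  (measurable_uncurry_sdr'_integrand f).lintegral_prod_right (ν := volume.restrict (Ioi 0))

lemma lintegral_sdr' {f : ℝ → ℝ≥0} (hf : Measurable f) :
    ∫⁻ x, sdr' f x = ∫⁻ x, (f x : ℝ≥0∞) := by
  have hlayercake := lintegral_eq_lintegral_meas_lt volume (f := fun x => (f x : ℝ))
    (ae_of_all _ fun x => (f x).coe_nonneg) hf.coe_nnreal_real.aemeasurable
  simp only [ENNReal.ofReal_coe_nnreal] at hlayercake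
  calc ∫⁻ x, sdr' f x
      = ∫⁻ t in Ioi 0, ∫⁻ x : ℝ,
          if ENNReal.ofReal (2 * |x|) < superlevelVolume f t then 1 else 0 :=
        lintegral_lintegral_swap (measurable_uncurry_sdr'_integrand f).aemeasurable
    _ = ∫⁻ t in Ioi 0, volume {z | t < (f z : ℝ)} := by
        refine setLIntegral_congr_fun measurableSet_Ioi fun t ht => ?_
        rw [lintegral_ite_ofReal_two_mul_abs_lt, superlevelVolume]
        congr! 3 with z
        rw [← ENNReal.ofReal_coe_nnreal, ENNReal.ofReal_lt_ofReal_iff_of_nonneg (le_of_lt ht)]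
    _ = ∫⁻ x, (f x : ℝ≥0∞) := hlayercake.symm

lemma sdr'_le_sdr' {f g : ℝ → ℝ≥0} {x : ℝ}
    (h : ∀ t, ENNReal.ofReal (2 * |x|) < superlevelVolume f t →
      ENNReal.ofReal (2 * |x|) < superlevelVolume g t) :
    sdr' f x ≤ sdr' g x := by
  rw [sdr'_eq_lintegral, sdr'_eq_lintegral]
  refine lintegral_mono fun t => ?_
  by_cases hf : ENNReal.ofReal (2 * |x|) < superlevelVolume f t
  · rw [if_pos hf, if_pos (h t hf)]
  · rw [if_neg hf]
    exact zero_le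

lemma sdr'_mono {f g : ℝ → ℝ≥0} (hfg : f ≤ g) : sdr' f ≤ sdr' g :=
  fun _ => sdr'_le_sdr' fun _ h =>
    h.trans_le (measure_mono fun _ hz => hz.trans_le (ENNReal.coe_le_coe.2 (hfg _)))

lemma sdr'_eq_zero {f : ℝ → ℝ≥0} {x : ℝ} (hf : ∀ z, |x| ≤ |z| → f z = 0) : sdr' f x = 0 := by
  have hsmall : ∀ t, superlevelVolume f t ≤ ENNReal.ofReal (2 * |x|) := fun t =>
    calc superlevelVolume f t ≤ volume (Ioo (-|x|) |x|) := measure_mono fun z hz => by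
          refine abs_lt.1 (not_le.1 fun hxz => ?_)
          simp [hf z hxz] at hz
      _ = ENNReal.ofReal (2 * |x|) := by rw [Real.volume_Ioo]; ring_nf
  rw [sdr'_eq_lintegral]
  exact (lintegral_congr fun t => if_neg (hsmall t).not_gt).trans lintegral_zero

lemma setLIntegral_Ioi_comp_const_mul {g : ℝ → ℝ≥0∞} (hg : Measurable g) {a : ℝ} (ha : 0 < a) :
    ∫⁻ t in Ioi 0, g (a * t) = ENNReal.ofReal a⁻¹ * ∫⁻ u in Ioi 0, g u := by
  have hmap : Measure.map (a * ·) (volume.restrict (Ioi 0))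
      = ENNReal.ofReal a⁻¹ • volume.restrict (Ioi 0) :=
    calc Measure.map (a * ·) (volume.restrict (Ioi 0))
        = Measure.map (a * ·) (volume.restrict ((a * ·) ⁻¹' Ioi 0)) := by
          rw [preimage_const_mul_Ioi₀ _ ha, zero_div]
      _ = (Measure.map (a * ·) volume).restrict (Ioi 0) :=
          (Measure.restrict_map (measurable_const_mul a) measurableSet_Ioi).symm
      _ = ENNReal.ofReal a⁻¹ • volume.restrict (Ioi 0) := by
          rw [Real.map_volume_mul_left ha.ne', Measure.restrict_smul, abs_of_pos (inv_pos.2 ha)]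
  rw [← lintegral_map hg (measurable_const_mul a), hmap, lintegral_smul_measure, smul_eq_mul]

lemma sdr'_div_const (f : ℝ → ℝ≥0) {q : ℝ≥0} (hq : q ≠ 0) (x : ℝ) :
    sdr' (fun z => f z / q) x = (q : ℝ≥0∞)⁻¹ * sdr' f x := by
  have hqpos : (0 : ℝ) < q := NNReal.coe_pos.2 (pos_iff_ne_zero.2 hq)
  have hscale : ∀ t : ℝ, superlevelVolume (fun z => f z / q) t = superlevelVolume f (q * t) := by
    intro t
    simp only [superlevelVolume, ENNReal.coe_div hq]
    congr! 3 with z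
    rw [ENNReal.lt_div_iff_mul_lt (.inl (ENNReal.coe_ne_zero.2 hq)) (.inl ENNReal.coe_ne_top),
      ENNReal.ofReal_mul hqpos.le, ENNReal.ofReal_coe_nnreal, mul_comm]
  simp only [sdr'_eq_lintegral, hscale]
  rw [setLIntegral_Ioi_comp_const_mul (g := fun u =>
      if ENNReal.ofReal (2 * |x|) < superlevelVolume f u then 1 else 0)
      (Measurable.ite (measurableSet_lt measurable_const (measurable_superlevelVolume f))
        measurable_const measurable_const) hqpos,
    ENNReal.ofReal_inv_of_pos hqpos, ENNReal.ofReal_coe_nnreal]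

lemma asu_zero_iff {f : ℝ → ℝ≥0} : ASU 0 f ↔ ∀ w z : ℝ, |w| ≤ |z| → f z ≤ f w := by
  constructor
  · rintro ⟨hsymm, -, hanti⟩ w z hwz
    have heven : ∀ y, f y = f |y| := fun y => by
      rcases abs_choice y with hy | hy
      · rw [hy]
      · simpa [hy] using (hsymm y).symm
    rw [heven w, heven z]
    exact hanti (abs_nonneg w) ((abs_nonneg w).trans hwz) hwz
  · intro h
    refine ⟨fun x => ?_, fun a ha b hb hab => h _ _ ?_, fun a ha b hb hab => h _ _ ?_⟩
    · exact (h _ _ (by simp)).antisymm (h _ _ (by simp))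
    · rw [abs_of_nonpos hb, abs_of_nonpos (hab.trans hb)]
      linarith
    · rwa [abs_of_nonneg ha, abs_of_nonneg (ha.trans hab)]

lemma ASU.le_of_abs_le_s4 {f : ℝ → ℝ≥0} (hf : ASU 0 f) {w z : ℝ} (hwz : |w| ≤ |z|) :
    f z ≤ f w :=
  asu_zero_iff.1 hf w z hwz

lemma ASU.div_const {f : ℝ → ℝ≥0} (hf : ASU 0 f) (q : ℝ≥0) : ASU 0 (fun z => f z / q) :=
  asu_zero_iff.2 fun _ _ hwz => div_le_div_of_nonneg_right (hf.le_of_abs_le_s4 hwz) q.2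

lemma ASU.ite_abs_lt {f : ℝ → ℝ≥0} (hf : ASU 0 f) (k : ℝ≥0∞) :
    ASU 0 (fun z => if ENNReal.ofReal |z| < k then f z else 0) := by
  refine asu_zero_iff.2 fun w z hwz => ?_
  by_cases hz : ENNReal.ofReal |z| < k
  · rw [if_pos hz, if_pos ((ENNReal.ofReal_le_ofReal hwz).trans_lt hz)]
    exact hf.le_of_abs_le_s4 hwz
  · rw [if_neg hz]
    exact zero_le

lemma isPdf_ite_div {f : ℝ → ℝ≥0} (hf : Measurable f) {P : ℝ → Prop} [DecidablePred P]
    (hP : MeasurableSet {x | P x}) {p : ℝ≥0∞} (hfP : ∫⁻ x in {x | P x}, (f x : ℝ≥0∞) = p)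
    (hp0 : p ≠ 0) (hp : p ≠ ∞) : IsPdf (fun x => if P x then f x / p.toNNReal else 0) := by
  refine ⟨Measurable.ite hP (hf.div_const _) measurable_const, ?_⟩
  calc ∫⁻ x, ((if P x then f x / p.toNNReal else 0 : ℝ≥0) : ℝ≥0∞)
      = ∫⁻ x, {x | P x}.indicator (fun x => (f x : ℝ≥0∞) * p⁻¹) x := by
        refine lintegral_congr fun x => ?_
        by_cases hx : P x
        · rw [if_pos hx, indicator_of_mem (show x ∈ {x | P x} from hx),
            ENNReal.coe_div (ENNReal.toNNReal_pos hp0 hp).ne',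
            ENNReal.coe_toNNReal hp, div_eq_mul_inv]
        · rw [if_neg hx, indicator_of_notMem (show x ∉ {x | P x} from hx), ENNReal.coe_zero]
    _ = 1 := by
        rw [lintegral_indicator hP, lintegral_mul_const' _ _ (ENNReal.inv_ne_top.2 hp0), hfP,
          ENNReal.mul_inv_cancel hp0 hp]

lemma exists_lt_abs_of_ofReal_two_mul_lt_superlevelVolume {f : ℝ → ℝ≥0} {r t : ℝ}
    (h : ENNReal.ofReal (2 * r) < superlevelVolume f t) :
    ∃ y, r < |y| ∧ ENNReal.ofReal t < f y := by
  by_contra! hcon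
  refine h.not_ge ?_
  calc superlevelVolume f t ≤ volume (Icc (-r) r) :=
        measure_mono fun z hz => abs_le.1 (not_lt.1 fun hrz => (hcon z hrz).not_gt hz)
    _ = ENNReal.ofReal (2 * r) := by rw [Real.volume_Icc]; ring_nf

lemma sdr'_le_sdr'_ite_abs_lt {f : ℝ → ℝ≥0} (hf : ASU 0 f) {k : ℝ≥0∞} {x : ℝ}
    (hx : ENNReal.ofReal |x| < k) :
    sdr' f x ≤ sdr' (fun z => if ENNReal.ofReal |z| < k then f z else 0) x := by
  refine sdr'_le_sdr' fun t ht => ?_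
  obtain ⟨y, hxy, hty⟩ := exists_lt_abs_of_ofReal_two_mul_lt_superlevelVolume ht
  obtain ⟨r, -, hxr₀, hrk⟩ := ENNReal.lt_iff_exists_real_btwn.1 hx
  have hxr : |x| < r := (ENNReal.ofReal_lt_ofReal_iff'.1 hxr₀).1
  set s := min |y| r
  have hxs : |x| < s := lt_min hxy hxr
  have hwindow : Ioo (-s) s ⊆ {z | ENNReal.ofReal t <
      ((if ENNReal.ofReal |z| < k then f z else 0 : ℝ≥0) : ℝ≥0∞)} := by
    intro z hz
    have hzs : |z| < s := abs_lt.2 hz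
    have hzk : ENNReal.ofReal |z| < k :=
      (ENNReal.ofReal_le_ofReal (hzs.le.trans (min_le_right _ _))).trans_lt hrk
    rw [mem_ofPred_eq, if_pos hzk]
    exact hty.trans_le (ENNReal.coe_le_coe.2 (hf.le_of_abs_le_s4 (hzs.le.trans (min_le_left _ _))))
  calc ENNReal.ofReal (2 * |x|) < ENNReal.ofReal (2 * s) :=
        ENNReal.ofReal_lt_ofReal_iff'.2 ⟨by linarith, by linarith [abs_nonneg x]⟩
    _ = volume (Ioo (-s) s) := by rw [Real.volume_Ioo]; ring_nf
    _ ≤ _ := measure_mono hwindow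

lemma setLIntegral_Ioo_sdr'_le_of_isPdf {f g : ℝ → ℝ≥0} (hf : IsPdf f) (hg : IsPdf g) {ρ : ℝ}
    (hfρ : ∀ z, ρ ≤ |z| → f z = 0) :
    ∫⁻ x in Ioo (-ρ) ρ, sdr' g x ≤ ∫⁻ x in Ioo (-ρ) ρ, sdr' f x := by
  have hsupport : Function.support (sdr' f) ⊆ Ioo (-ρ) ρ := fun x hx =>
    abs_lt.1 (not_le.1 fun hρx => hx (sdr'_eq_zero fun z hxz => hfρ z (hρx.trans hxz)))
  calc ∫⁻ x in Ioo (-ρ) ρ, sdr' g x ≤ ∫⁻ x, sdr' g x := setLIntegral_le_lintegral _ _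
    _ = ∫⁻ x, sdr' f x := by rw [lintegral_sdr' hg.1, lintegral_sdr' hf.1, hg.2, hf.2]
    _ = ∫⁻ x in Ioo (-ρ) ρ, sdr' f x := (setLIntegral_eq_of_support_subset hsupport).symm

lemma setLIntegral_Ioo_sdr'_ite_div_le {ξ π : ℝ → ℝ≥0} (hξ : ASU 0 ξ) {ρ : ℝ}
    (hmaj : ∫⁻ x in Ioo (-ρ) ρ, sdr' π x ≤ ∫⁻ x in Ioo (-ρ) ρ, sdr' ξ x)
    (P : ℝ → Prop) [DecidablePred P] {q : ℝ≥0} (hq : q ≠ 0) {k : ℝ≥0∞}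
    (hρk : ENNReal.ofReal ρ ≤ k) :
    ∫⁻ x in Ioo (-ρ) ρ, sdr' (fun x => if P x then π x / q else 0) x
      ≤ ∫⁻ x in Ioo (-ρ) ρ, sdr' (fun x => if ENNReal.ofReal |x| < k then ξ x / q else 0) x :=
  calc ∫⁻ x in Ioo (-ρ) ρ, sdr' (fun x => if P x then π x / q else 0) x
      ≤ ∫⁻ x in Ioo (-ρ) ρ, (q : ℝ≥0∞)⁻¹ * sdr' π x := by
        refine lintegral_mono fun x => (sdr'_mono (fun z => ?_) x).trans_eq (sdr'_div_const π hq x)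
        split_ifs <;> simp
    _ ≤ ∫⁻ x in Ioo (-ρ) ρ, (q : ℝ≥0∞)⁻¹ * sdr' ξ x := by
        rw [lintegral_const_mul _ (measurable_sdr' π), lintegral_const_mul _ (measurable_sdr' ξ)]
        gcongr
    _ ≤ ∫⁻ x in Ioo (-ρ) ρ, sdr' (fun x => if ENNReal.ofReal |x| < k then ξ x / q else 0) x := by
        refine setLIntegral_mono (measurable_sdr' _) fun x hx => ?_
        have hxρ : |x| < ρ := abs_lt.2 hx
        have hxk : ENNReal.ofReal |x| < k :=
          ((ENNReal.ofReal_lt_ofReal_iff ((abs_nonneg x).trans_lt hxρ)).2 hxρ).trans_le hρk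
        rw [← sdr'_div_const ξ hq x]
        exact sdr'_le_sdr'_ite_abs_lt (hξ.div_const q) hxk

theorem stmt4_general (ξ π : ℝ → ℝ≥0) (hξ : IsPdf ξ) (hπ : IsPdf π)
    (hξA : ASU 0 ξ) (hmaj : Majorizes ξ π)
    (φ : ℝ → Bool) (hφ : Measurable φ)
    (p : ℝ≥0∞) (hp : p = ∫⁻ x in {x : ℝ | φ x = false}, (π x : ℝ≥0∞)) (hp0 : 0 < p)
    (k : ℝ≥0∞)
    (hk : ∫⁻ x in {x : ℝ | ENNReal.ofReal |x| < k}, (ξ x : ℝ≥0∞) = p) :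
    IsPdf (fun x => if ENNReal.ofReal |x| < k then ξ x / p.toNNReal else 0) ∧
    IsPdf (fun x => if φ x = false then π x / p.toNNReal else 0) ∧
    ASU 0 (fun x => if ENNReal.ofReal |x| < k then ξ x / p.toNNReal else 0) ∧
    Majorizes (fun x => if ENNReal.ofReal |x| < k then ξ x / p.toNNReal else 0)
      (fun x => if φ x = false then π x / p.toNNReal else 0) := by
  have hp_ne_top : p ≠ ∞ := ne_top_of_le_ne_top ENNReal.one_ne_top
    (hp ▸ hπ.2 ▸ setLIntegral_le_lintegral _ _)
  have hξθ : IsPdf (fun x => if ENNReal.ofReal |x| < k then ξ x / p.toNNReal else 0) :=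
    isPdf_ite_div hξ.1 (measurableSet_lt measurable_abs.ennreal_ofReal measurable_const) hk
      hp0.ne' hp_ne_top
  have hπφ : IsPdf (fun x => if φ x = false then π x / p.toNNReal else 0) :=
    isPdf_ite_div hπ.1 (hφ (measurableSet_singleton false)) hp.symm hp0.ne' hp_ne_top
  refine ⟨hξθ, hπφ, (hξA.div_const _).ite_abs_lt k, fun ρ hρ => ?_⟩
  rcases le_total k (ENNReal.ofReal ρ) with hkρ | hρk
  · refine setLIntegral_Ioo_sdr'_le_of_isPdf hξθ hπφ fun z hρz => if_neg ?_
    exact not_lt.2 (hkρ.trans (ENNReal.ofReal_le_ofReal hρz))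
  · exact setLIntegral_Ioo_sdr'_ite_div_le hξA (hmaj ρ hρ) _
      (ENNReal.toNNReal_pos hp0.ne' hp_ne_top).ne' hρk

/-- Property 4 (c = 0): if `ξ` is ASU(0) and majorizes `π`, and `θ` is the threshold
prescription around 0 with no-transmission probability under `ξ` matched to that of
`φ` under `π`, then the conditioned beliefs are pdfs, `ξ_θ` is ASU(0), and
`ξ_θ` majorizes `π_φ`. -/
theorem stmt4 (ξ π : ℝ → ℝ≥0) (hξ : IsPdf ξ) (hπ : IsPdf π)
    (hξA : ASU 0 ξ) (hmaj : Majorizes ξ π)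
    (φ : ℝ → Bool) (hφ : Measurable φ)
    (p : ℝ≥0∞) (hp : p = ∫⁻ x in {x : ℝ | φ x = false}, (π x : ℝ≥0∞)) (hp0 : 0 < p)
    (k : ℝ≥0∞) (hk0 : 0 < k)
    (hk : ∫⁻ x in {x : ℝ | ENNReal.ofReal |x| < k}, (ξ x : ℝ≥0∞) = p) :
    IsPdf (fun x => if ENNReal.ofReal |x| < k then ξ x / p.toNNReal else 0) ∧
    IsPdf (fun x => if φ x = false then π x / p.toNNReal else 0) ∧
    ASU 0 (fun x => if ENNReal.ofReal |x| < k then ξ x / p.toNNReal else 0) ∧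
    Majorizes (fun x => if ENNReal.ofReal |x| < k then ξ x / p.toNNReal else 0)
      (fun x => if φ x = false then π x / p.toNNReal else 0) :=
  stmt4_general ξ π hξ hπ hξA hmaj φ hφ p hp hp0 k hk
end
end

section
/- Let ξ and π be pdfs on ℝ with ξ ASU(0) and ξ ⪰_m π, and let d be a distortion function. Then D(π) ≥ D(ξ), where D(π) := inf_{ê ∈ ℝ} ∫_ℝ d(e − ê) π(e) de (integrals in [0, ∞]). -/
open MeasureTheory Set
open scoped ENNReal NNReal

noncomputable section

/-!
By the layer-cake formula, the expected distortion is `∫₀^∞ (1 - P(d(e - ê) ≤ t)) dt`, so it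
suffices to show, level by level, that `π` puts no more mass on a translate of a sublevel set
`S = {d ≤ t}` than `ξ` puts on `S`. As `d` is even and nondecreasing in `|x|`, `S` is `ℝ` or an
interval centred at `0`, of length `2r` say. The `π`-mass of any set of measure `2r` is at most
`∫₀^∞ min(2r, vol{π > ρ}) dρ = ∫_{-r}^{r} π^σ ≤ ∫_{-r}^{r} ξ^σ`, and since `ξ` is symmetric
unimodal, `ξ^σ ≤ ξ` while `(-r, r) ⊆ S`.
-/

lemma lintegral_ite_eq_measure {α : Type*} [MeasurableSpace α] (μ : Measure α) {p : α → Prop}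
    [DecidablePred p] (hp : MeasurableSet {x | p x}) :
    ∫⁻ x, (if p x then 1 else 0) ∂μ = μ {x | p x} := by
  rw [← lintegral_indicator_one hp]
  simp only [Set.indicator_apply, mem_ofPred_eq, Pi.one_apply]

lemma lintegral_Ioi_ite_ofReal_lt (c : ℝ≥0∞) :
    ∫⁻ ρ in Ioi (0 : ℝ), (if ENNReal.ofReal ρ < c then 1 else 0) = c := by
  rw [lintegral_ite_eq_measure _ (measurableSet_lt ENNReal.measurable_ofReal measurable_const),
    Measure.restrict_apply' measurableSet_Ioi]
  rcases eq_or_ne c ∞ with rfl | hc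
  · simp
  · have : {ρ : ℝ | ENNReal.ofReal ρ < c} ∩ Ioi 0 = Ioo 0 c.toReal := by
      ext ρ
      simp +contextual [and_comm, ENNReal.ofReal_lt_iff_lt_toReal, le_of_lt, hc]
    rw [this, Real.volume_Ioo, sub_zero, ENNReal.ofReal_toReal hc]

theorem lintegral_eq_lintegral_meas_ofReal_lt {α : Type*} [MeasurableSpace α]
    (μ : Measure α) [SFinite μ] {f : α → ℝ≥0∞} (hf : Measurable f) :
    ∫⁻ x, f x ∂μ = ∫⁻ t in Ioi (0 : ℝ), μ {x | ENNReal.ofReal t < f x} := by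
  have hmeas : Measurable fun p : α × ℝ =>
      if ENNReal.ofReal p.2 < f p.1 then (1 : ℝ≥0∞) else 0 :=
    Measurable.ite (measurableSet_lt (ENNReal.measurable_ofReal.comp measurable_snd)
      (hf.comp measurable_fst)) measurable_const measurable_const
  calc ∫⁻ x, f x ∂μ
      = ∫⁻ x, (∫⁻ t in Ioi (0 : ℝ), if ENNReal.ofReal t < f x then 1 else 0) ∂μ := by
        simp_rw [lintegral_Ioi_ite_ofReal_lt]
    _ = ∫⁻ t in Ioi (0 : ℝ), ∫⁻ x, (if ENNReal.ofReal t < f x then 1 else 0) ∂μ :=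
        lintegral_lintegral_swap hmeas.aemeasurable
    _ = ∫⁻ t in Ioi (0 : ℝ), μ {x | ENNReal.ofReal t < f x} := by
        simp_rw [lintegral_ite_eq_measure μ (measurableSet_lt measurable_const hf)]

lemma Function.Even.apply_abs {β : Type*} {g : ℝ → β} (hg : Function.Even g) (x : ℝ) :
    g |x| = g x := by
  rcases abs_choice x with h | h <;> rw [h]
  exact hg x

lemma IsDistortion.le_of_abs_le_s6 {d : ℝ → ℝ≥0∞} (hd : IsDistortion d) {a b : ℝ}
    (hab : |a| ≤ |b|) : d a ≤ d b := by
  have heven : Function.Even d := hd.2.1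
  rw [← heven.apply_abs a, ← heven.apply_abs b]
  exact hd.2.2 (abs_nonneg a) (abs_nonneg b) hab

lemma ASU.le_of_abs_le_s6 {ξ : ℝ → ℝ≥0} (hξ : ASU 0 ξ) {a b : ℝ} (hab : |a| ≤ |b|) :
    ξ b ≤ ξ a := by
  have heven : Function.Even ξ := fun x => by simpa using hξ.1 x
  rw [← heven.apply_abs a, ← heven.apply_abs b]
  exact hξ.2.2 (abs_nonneg a) (abs_nonneg b) hab

def IsAbsLowerSet (S : Set ℝ) : Prop :=
  ∀ ⦃a b : ℝ⦄, |a| ≤ |b| → b ∈ S → a ∈ S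

namespace IsAbsLowerSet

variable {S : Set ℝ}

lemma mem_of_ofReal_two_mul_abs_lt_volume (hS : IsAbsLowerSet S) {y : ℝ}
    (hy : ENNReal.ofReal (2 * |y|) < volume S) : y ∈ S := by
  by_contra hyS
  have hsub : S ⊆ Ioo (-|y|) |y| := fun b hb =>
    abs_lt.mp (lt_of_not_ge fun h => hyS (hS h hb))
  have := hy.trans_le (measure_mono hsub)
  rw [Real.volume_Ioo, sub_neg_eq_add, ← two_mul] at this
  exact this.false

lemma eq_univ_of_volume_eq_top (hS : IsAbsLowerSet S) (h : volume S = ∞) : S = univ :=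
  eq_univ_of_forall fun _ =>
    hS.mem_of_ofReal_two_mul_abs_lt_volume (h ▸ ENNReal.ofReal_lt_top)

lemma Ioo_subset (hS : IsAbsLowerSet S) (h : volume S ≠ ∞) :
    Ioo (-((volume S).toReal / 2)) ((volume S).toReal / 2) ⊆ S := by
  intro y hy
  refine hS.mem_of_ofReal_two_mul_abs_lt_volume ?_
  rw [ENNReal.ofReal_lt_iff_lt_toReal (by positivity) h]
  linarith [abs_lt.mpr hy]

end IsAbsLowerSet

lemma IsDistortion.isAbsLowerSet_setOf_le {d : ℝ → ℝ≥0∞} (hd : IsDistortion d) (τ : ℝ≥0∞) :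
    IsAbsLowerSet {x | d x ≤ τ} :=
  fun _ _ hab hb => (hd.le_of_abs_le_s6 hab).trans hb

lemma sdr_le_self {f : ℝ → ℝ≥0∞} (hf : ∀ ⦃a b : ℝ⦄, |a| ≤ |b| → f b ≤ f a)
    (x : ℝ) : sdr f x ≤ f x := by
  calc sdr f x ≤ ∫⁻ ρ in Ioi (0 : ℝ), (if ENNReal.ofReal ρ < f x then 1 else 0) := by
        refine lintegral_mono fun ρ => ?_
        split_ifs with h hx
        · exact le_rfl
        · have hlower : IsAbsLowerSet {z | ENNReal.ofReal ρ < f z} :=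
            fun _ _ hab hb => hb.trans_le (hf hab)
          exact absurd (hlower.mem_of_ofReal_two_mul_abs_lt_volume h) hx
        all_goals exact zero_le
    _ = f x := lintegral_Ioi_ite_ofReal_lt _

lemma volume_Ioo_inter_setOf_ofReal_two_mul_abs_lt (r : ℝ) (M : ℝ≥0∞) :
    volume (Ioo (-r) r ∩ {x | ENNReal.ofReal (2 * |x|) < M})
      = min (ENNReal.ofReal (2 * r)) M := by
  rcases eq_or_ne M ∞ with rfl | hM
  · simp [Real.volume_Ioo, two_mul]
  · have hset :
        {x : ℝ | ENNReal.ofReal (2 * |x|) < M} = Ioo (-(M.toReal / 2)) (M.toReal / 2) := by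
      ext x
      rw [mem_ofPred_eq, ENNReal.ofReal_lt_iff_lt_toReal (by positivity) hM, mem_Ioo, ← abs_lt]
      constructor <;> intro h <;> linarith
    rw [hset, Ioo_inter_Ioo, max_neg_neg, Real.volume_Ioo, sub_neg_eq_add, ← two_mul,
      mul_min_of_nonneg _ _ zero_le_two, mul_div_cancel₀ _ two_ne_zero, ENNReal.ofReal_min,
      ENNReal.ofReal_toReal hM]

lemma setLIntegral_Ioo_sdr (f : ℝ → ℝ≥0∞) (r : ℝ) :
    ∫⁻ x in Ioo (-r) r, sdr f x
      = ∫⁻ ρ in Ioi (0 : ℝ),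
          min (ENNReal.ofReal (2 * r)) (volume {z | ENNReal.ofReal ρ < f z}) := by
  set m : ℝ → ℝ≥0∞ := fun ρ => volume {z | ENNReal.ofReal ρ < f z}
  have hm : Measurable m := Antitone.measurable fun ρ₁ ρ₂ h =>
    measure_mono fun z hz => (ENNReal.ofReal_le_ofReal h).trans_lt hz
  have hmeas : Measurable fun p : ℝ × ℝ =>
      if ENNReal.ofReal (2 * |p.1|) < m p.2 then (1 : ℝ≥0∞) else 0 :=
    Measurable.ite (measurableSet_lt (by fun_prop) (hm.comp measurable_snd))
      measurable_const measurable_const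
  calc ∫⁻ x in Ioo (-r) r, sdr f x
      = ∫⁻ ρ in Ioi (0 : ℝ), ∫⁻ x in Ioo (-r) r,
          if ENNReal.ofReal (2 * |x|) < m ρ then 1 else 0 :=
        lintegral_lintegral_swap hmeas.aemeasurable
    _ = ∫⁻ ρ in Ioi (0 : ℝ), min (ENNReal.ofReal (2 * r)) (m ρ) := by
        refine lintegral_congr fun ρ => ?_
        rw [lintegral_ite_eq_measure _ (measurableSet_lt (by fun_prop) measurable_const),
          Measure.restrict_apply' measurableSet_Ioo, inter_comm,
          volume_Ioo_inter_setOf_ofReal_two_mul_abs_lt]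

lemma setLIntegral_le_lintegral_min_volume {f : ℝ → ℝ≥0∞} (hf : Measurable f) (C : Set ℝ) :
    ∫⁻ x in C, f x
      ≤ ∫⁻ ρ in Ioi (0 : ℝ), min (volume C) (volume {z | ENNReal.ofReal ρ < f z}) := by
  rw [lintegral_eq_lintegral_meas_ofReal_lt _ hf]
  refine lintegral_mono fun ρ => ?_
  rw [Measure.restrict_apply (measurableSet_lt measurable_const hf)]
  exact le_min (measure_mono inter_subset_right) (measure_mono inter_subset_left)

lemma IsPdf.setLIntegral_le_one {g : ℝ → ℝ≥0} (hg : IsPdf g) (S : Set ℝ) :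
    ∫⁻ x in S, (g x : ℝ≥0∞) ≤ 1 :=
  hg.2 ▸ setLIntegral_le_lintegral S _

lemma IsPdf.setLIntegral_compl {g : ℝ → ℝ≥0} (hg : IsPdf g) {S : Set ℝ}
    (hS : MeasurableSet S) :
    ∫⁻ x in Sᶜ, (g x : ℝ≥0∞) = 1 - ∫⁻ x in S, (g x : ℝ≥0∞) :=
  ENNReal.eq_sub_of_add_eq (ne_top_of_le_ne_top ENNReal.one_ne_top (hg.setLIntegral_le_one S))
    (by rw [add_comm, lintegral_add_compl _ hS, hg.2])

theorem setLIntegral_preimage_sub_le_of_majorizes {ξ π : ℝ → ℝ≥0} (hξ : IsPdf ξ)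
    (hπ : IsPdf π) (hξA : ASU 0 ξ) (hmaj : Majorizes ξ π) {S : Set ℝ} (hS : IsAbsLowerSet S)
    (c : ℝ) :
    ∫⁻ e in (fun e => e - c) ⁻¹' S, (π e : ℝ≥0∞) ≤ ∫⁻ e in S, (ξ e : ℝ≥0∞) := by
  rcases eq_or_ne (volume S) ∞ with hV | hV
  · rw [hS.eq_univ_of_volume_eq_top hV, Measure.restrict_univ, hξ.2]
    exact hπ.setLIntegral_le_one _
  set r := (volume S).toReal / 2
  have h2r : ENNReal.ofReal (2 * r) = volume S := by
    rw [mul_div_cancel₀ _ two_ne_zero, ENNReal.ofReal_toReal hV]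
  have hvol : volume ((fun e => e - c) ⁻¹' S) = volume S := measure_preimage_add_right _ _ _
  calc ∫⁻ e in (fun e => e - c) ⁻¹' S, (π e : ℝ≥0∞)
      ≤ ∫⁻ ρ in Ioi (0 : ℝ), min (volume S) (volume {z | ENNReal.ofReal ρ < (π z : ℝ≥0∞)}) :=
        hvol ▸ setLIntegral_le_lintegral_min_volume hπ.1.coe_nnreal_ennreal _
    _ = ∫⁻ x in Ioo (-r) r, sdr' π x := by rw [sdr', setLIntegral_Ioo_sdr, h2r]
    _ ≤ ∫⁻ x in Ioo (-r) r, sdr' ξ x := hmaj r (by positivity)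
    _ ≤ ∫⁻ x in Ioo (-r) r, (ξ x : ℝ≥0∞) :=
        lintegral_mono <| sdr_le_self fun _ _ hab => ENNReal.coe_le_coe.2 (hξA.le_of_abs_le_s6 hab)
    _ ≤ ∫⁻ e in S, (ξ e : ℝ≥0∞) := lintegral_mono_set (hS.Ioo_subset hV)

lemma IsPdf.lintegral_mul_eq_lintegral_one_sub {g : ℝ → ℝ≥0} (hg : IsPdf g) {f : ℝ → ℝ≥0∞}
    (hf : Measurable f) :
    ∫⁻ e, f e * g e
      = ∫⁻ t in Ioi (0 : ℝ), (1 - ∫⁻ e in {e | f e ≤ ENNReal.ofReal t}, (g e : ℝ≥0∞)) := by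
  have hdensity : ∫⁻ e, f e * g e = ∫⁻ e, f e ∂(volume.withDensity fun e => (g e : ℝ≥0∞)) := by
    rw [lintegral_withDensity_eq_lintegral_mul _ hg.1.coe_nnreal_ennreal hf]
    simp only [Pi.mul_apply, mul_comm]
  rw [hdensity, lintegral_eq_lintegral_meas_ofReal_lt _ hf]
  refine lintegral_congr fun t => ?_
  rw [← hg.setLIntegral_compl (measurableSet_le hf measurable_const),
    withDensity_apply _ (measurableSet_lt measurable_const hf)]
  simp only [compl_ofPred, not_le]

/-- Property 6: if `ξ` is ASU(0) and majorizes `π`, then the minimal expected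
distortion under `ξ` is at most that under `π`. -/
theorem stmt6 (ξ π : ℝ → ℝ≥0) (hξ : IsPdf ξ) (hπ : IsPdf π)
    (hξA : ASU 0 ξ) (hmaj : Majorizes ξ π)
    (d : ℝ → ℝ≥0∞) (hd : IsDistortion d) :
    (⨅ ehat : ℝ, ∫⁻ e, d (e - ehat) * (ξ e : ℝ≥0∞)) ≤
      ⨅ ehat : ℝ, ∫⁻ e, d (e - ehat) * (π e : ℝ≥0∞) := by
  refine le_iInf fun ehat => (iInf_le _ 0).trans ?_
  have hshift : ∀ c : ℝ, Measurable fun e => d (e - c) := fun c =>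
    hd.1.comp (measurable_sub_const c)
  rw [hξ.lintegral_mul_eq_lintegral_one_sub (hshift 0),
    hπ.lintegral_mul_eq_lintegral_one_sub (hshift ehat)]
  refine lintegral_mono fun t => tsub_le_tsub_left ?_ 1
  simpa using setLIntegral_preimage_sub_le_of_majorizes hξ hπ hξA hmaj
    (hd.isAbsLowerSet_setOf_le (ENNReal.ofReal t)) ehat
end
end

section
/- Let π be a pdf on ℝ and let d be a distortion function. Then for every ê ∈ ℝ, ∫_ℝ d(e) π^σ(e) de ≤ ∫_ℝ d(e − ê) π(e) de (integrals in [0, ∞]); consequently inf_{ê ∈ ℝ} ∫_ℝ d(e − ê) π^σ(e) de ≤ inf_{ê ∈ ℝ} ∫_ℝ d(e − ê) π(e) de. -/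
open MeasureTheory Set
open scoped ENNReal NNReal

noncomputable section

/-! By the layer-cake formula both sides are integrals over `ρ > 0` of `∫ d` over a set of
measure `m ρ = vol {π > ρ}`, finite by Markov's inequality: for `π^σ` this set is the centred
interval of length `m ρ`, for `π` it is `{π > ρ}` shifted by `-ehat`. The bathtub principle compares
them levelwise: an even `d` that is nondecreasing in `|x|` has, among sets of given measure, the
smallest integral over the centred interval. The inequality of infima follows by taking `ehat = 0`
on the left. -/

namespace IsDistortion

variable {d : ℝ → ℝ≥0∞}

lemma apply_le_of_abs_le (hd : IsDistortion d) {x y : ℝ} (h : |x| ≤ |y|) : d x ≤ d y := by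
  have habs : ∀ z, d |z| = d z := fun z => by
    rcases abs_choice z with hz | hz <;> rw [hz]
    exact hd.2.1 z
  rw [← habs x, ← habs y]
  exact hd.2.2 (abs_nonneg x) (abs_nonneg y) h

/-- The bathtub principle: trading `I \ A` for `A \ I`, of equal measure, only moves mass to where
`d ≥ d r`. -/
lemma setLIntegral_Ioo_le (hd : IsDistortion d) {A : Set ℝ} (hA : MeasurableSet A) {r : ℝ}
    (hr : 0 ≤ r) (hvol : volume A = ENNReal.ofReal (2 * r)) :
    ∫⁻ x in Ioo (-r) r, d x ≤ ∫⁻ x in A, d x := by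
  set I := Ioo (-r) r
  have hIvol : volume I = volume A := by rw [Real.volume_Ioo, hvol]; ring_nf
  have hdiff : volume (I \ A) = volume (A \ I) :=
    measure_sdiff_symm measurableSet_Ioo.nullMeasurableSet hA.nullMeasurableSet hIvol
      (measure_ne_top_of_subset inter_subset_left (by simp [I]))
  have hin : ∀ x ∈ I \ A, d x ≤ d r := fun x hx =>
    hd.apply_le_of_abs_le ((abs_lt.2 hx.1).le.trans (le_abs_self r))
  have hout : ∀ x ∈ A \ I, d r ≤ d x := fun x hx =>
    hd.apply_le_of_abs_le ((abs_of_nonneg hr).le.trans (not_lt.1 fun h => hx.2 (abs_lt.1 h)))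
  calc ∫⁻ x in I, d x = (∫⁻ x in I ∩ A, d x) + ∫⁻ x in I \ A, d x :=
        (lintegral_inter_add_sdiff d I hA).symm
    _ ≤ (∫⁻ x in I ∩ A, d x) + ∫⁻ x in A \ I, d x := by
        refine add_le_add le_rfl ?_
        calc ∫⁻ x in I \ A, d x ≤ d r * volume (I \ A) :=
              (setLIntegral_mono measurable_const hin).trans_eq (setLIntegral_const _ _)
          _ = d r * volume (A \ I) := by rw [hdiff]
          _ ≤ ∫⁻ x in A \ I, d x :=
              (setLIntegral_const _ _).symm.trans_le
                (setLIntegral_mono' (hA.diff measurableSet_Ioo) hout)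
    _ = ∫⁻ x in A, d x := by
        rw [inter_comm, lintegral_inter_add_sdiff d A measurableSet_Ioo]

lemma setLIntegral_centered_le_setLIntegral_sub (hd : IsDistortion d) {A : Set ℝ}
    (hA : MeasurableSet A) (hA_fin : volume A ≠ ∞) (c : ℝ) :
    ∫⁻ x in {x | ENNReal.ofReal (2 * |x|) < volume A}, d x ≤ ∫⁻ x in A, d (x - c) := by
  set r := (volume A).toReal / 2
  have hI : {x : ℝ | ENNReal.ofReal (2 * |x|) < volume A} = Ioo (-r) r := by
    ext x
    rw [mem_ofPred_eq, ENNReal.ofReal_lt_iff_lt_toReal (by positivity) hA_fin, mem_Ioo, ← abs_lt]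
    constructor <;> intro h <;> simp only [r] at * <;> linarith
  have htrans : ∫⁻ x in A, d (x - c) = ∫⁻ x in (· + c) ⁻¹' A, d x := by
    simpa using ((measurePreserving_add_right volume c).setLIntegral_comp_preimage_emb
      (measurableEmbedding_addRight c) (fun x => d (x - c)) A).symm
  rw [hI, htrans]
  refine hd.setLIntegral_Ioo_le (hA.preimage (measurable_add_const c)) (by positivity) ?_
  rw [measure_preimage_add_right, show 2 * r = (volume A).toReal by ring,
    ENNReal.ofReal_toReal hA_fin]

end IsDistortion

lemma IsPdf.volume_lt_ne_top {π : ℝ → ℝ≥0} (hπ : IsPdf π) {ρ : ℝ} (hρ : 0 < ρ) :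
    volume {z | ENNReal.ofReal ρ < π z} ≠ ∞ := by
  have hρ' : ENNReal.ofReal ρ ≠ 0 := (ENNReal.ofReal_pos.2 hρ).ne'
  have markov := meas_ge_le_lintegral_div (μ := volume) (f := fun z => (π z : ℝ≥0∞))
    (measurable_coe_nnreal_ennreal.comp hπ.1).aemeasurable hρ' ENNReal.ofReal_ne_top
  rw [hπ.2] at markov
  exact ne_top_of_le_ne_top (ENNReal.div_ne_top ENNReal.one_ne_top hρ')
    ((measure_mono fun z (hz : ENNReal.ofReal ρ < π z) => hz.le).trans markov)

lemma setLIntegral_Ioi_ite_ofReal_lt_coe (a : ℝ≥0) :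
    ∫⁻ ρ in Ioi (0 : ℝ), (if ENNReal.ofReal ρ < a then 1 else 0) = a := by
  have hset : {ρ : ℝ | ENNReal.ofReal ρ < a} ∩ Ioi 0 = Ioo 0 (a : ℝ) := by
    ext ρ
    simp only [mem_inter_iff, mem_ofPred_eq, mem_Ioi, mem_Ioo]
    exact ⟨fun h => ⟨h.2, (ENNReal.ofReal_lt_coe_iff h.2.le).1 h.1⟩,
      fun h => ⟨(ENNReal.ofReal_lt_coe_iff h.1.le).2 h.2, h.1⟩⟩
  have hmeas : MeasurableSet {ρ : ℝ | ENNReal.ofReal ρ < a} :=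
    measurableSet_lt ENNReal.measurable_ofReal measurable_const
  have hind : (fun ρ : ℝ => if ENNReal.ofReal ρ < a then (1 : ℝ≥0∞) else 0) =
      {ρ : ℝ | ENNReal.ofReal ρ < a}.indicator 1 := by
    ext ρ
    simp [indicator_apply]
  rw [hind, lintegral_indicator_one hmeas, Measure.restrict_apply hmeas, hset, Real.volume_Ioo,
    sub_zero, ENNReal.ofReal_coe_nnreal]

lemma lintegral_mul_setLIntegral_Ioi_ite {g : ℝ → ℝ≥0∞} (hg : Measurable g)
    {P : ℝ → ℝ → Prop} [∀ e ρ, Decidable (P e ρ)] (hP : MeasurableSet {p : ℝ × ℝ | P p.1 p.2}) :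
    ∫⁻ e, g e * ∫⁻ ρ in Ioi (0 : ℝ), (if P e ρ then 1 else 0) =
      ∫⁻ ρ in Ioi (0 : ℝ), ∫⁻ e in {e | P e ρ}, g e := by
  have hite : Measurable fun p : ℝ × ℝ => if P p.1 p.2 then (1 : ℝ≥0∞) else 0 :=
    Measurable.ite hP measurable_const measurable_const
  calc ∫⁻ e, g e * ∫⁻ ρ in Ioi (0 : ℝ), (if P e ρ then 1 else 0)
      = ∫⁻ e, ∫⁻ ρ in Ioi (0 : ℝ), g e * (if P e ρ then 1 else 0) := by
        congr with e
        exact (lintegral_const_mul _ (hite.comp measurable_prodMk_left)).symm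
    _ = ∫⁻ ρ in Ioi (0 : ℝ), ∫⁻ e, g e * (if P e ρ then 1 else 0) :=
        lintegral_lintegral_swap ((hg.comp measurable_fst).mul hite).aemeasurable
    _ = ∫⁻ ρ in Ioi (0 : ℝ), ∫⁻ e in {e | P e ρ}, g e := by
        congr with ρ
        have hs : MeasurableSet {e | P e ρ} := measurable_prodMk_right hP
        rw [← lintegral_indicator hs]
        congr with e
        simp [indicator_apply]

theorem lintegral_mul_sdr'_le {π : ℝ → ℝ≥0} (hπ : IsPdf π) {d : ℝ → ℝ≥0∞} (hd : IsDistortion d)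
    (c : ℝ) : ∫⁻ e, d e * sdr' π e ≤ ∫⁻ e, d (e - c) * π e := by
  have hπm : Measurable fun z => (π z : ℝ≥0∞) := measurable_coe_nnreal_ennreal.comp hπ.1
  set m := fun ρ : ℝ => volume {z | ENNReal.ofReal ρ < π z}
  have hm : Measurable m := Antitone.measurable fun ρ ρ' h =>
    measure_mono fun z hz => (ENNReal.ofReal_le_ofReal h).trans_lt hz
  calc ∫⁻ e, d e * sdr' π e
      = ∫⁻ ρ in Ioi 0, ∫⁻ e in {e | ENNReal.ofReal (2 * |e|) < m ρ}, d e :=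
        lintegral_mul_setLIntegral_Ioi_ite hd.1 (measurableSet_lt
          (ENNReal.measurable_ofReal.comp (measurable_fst.abs.const_mul 2))
          (hm.comp measurable_snd))
    _ ≤ ∫⁻ ρ in Ioi 0, ∫⁻ e in {e | ENNReal.ofReal ρ < π e}, d (e - c) :=
        setLIntegral_mono' measurableSet_Ioi fun ρ hρ =>
          hd.setLIntegral_centered_le_setLIntegral_sub (measurableSet_lt measurable_const hπm)
            (hπ.volume_lt_ne_top hρ) c
    _ = ∫⁻ e, d (e - c) * ∫⁻ ρ in Ioi 0, (if ENNReal.ofReal ρ < π e then 1 else 0) :=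
        (lintegral_mul_setLIntegral_Ioi_ite (P := fun e ρ => ENNReal.ofReal ρ < π e)
          (hd.1.comp (measurable_sub_const c))
          (measurableSet_lt (ENNReal.measurable_ofReal.comp measurable_snd)
            (hπm.comp measurable_fst))).symm
    _ = ∫⁻ e, d (e - c) * π e := by simp_rw [setLIntegral_Ioi_ite_ofReal_lt_coe]

/-- The inequality `D(π) ≥ D(π^σ)`: for every `ehat`,
`∫ d(e) π^σ(e) de ≤ ∫ d(e - ehat) π(e) de`, and hence the corresponding
inequality of infima. -/
theorem stmt7 (π : ℝ → ℝ≥0) (hπ : IsPdf π) (d : ℝ → ℝ≥0∞) (hd : IsDistortion d) :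
    (∀ ehat : ℝ, ∫⁻ e, d e * sdr' π e ≤ ∫⁻ e, d (e - ehat) * (π e : ℝ≥0∞)) ∧
    (⨅ ehat : ℝ, ∫⁻ e, d (e - ehat) * sdr' π e) ≤
      ⨅ ehat : ℝ, ∫⁻ e, d (e - ehat) * (π e : ℝ≥0∞) := by
  have key := lintegral_mul_sdr'_le hπ hd
  refine ⟨key, ?_⟩
  calc ⨅ ehat : ℝ, ∫⁻ e, d (e - ehat) * sdr' π e
      ≤ ∫⁻ e, d (e - 0) * sdr' π e := iInf_le _ 0
    _ = ∫⁻ e, d e * sdr' π e := by simp_rw [sub_zero]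
    _ ≤ ⨅ ehat : ℝ, ∫⁻ e, d (e - ehat) * (π e : ℝ≥0∞) := le_iInf key
end
end

section
/- Let μ be a pdf on ℝ that is ASU(0), let a ∈ ℝ, and let h : ℝ → [0, ∞] be measurable, even, and nondecreasing on [0, ∞). Then the function H(e) := ∫_ℝ h(ae + w) μ(w) dw (integral in [0, ∞]) is even and nondecreasing on [0, ∞). -/
open MeasureTheory Set
open scoped ENNReal NNReal

noncomputable section

namespace Stmt13Aux

/-- Translation invariance of the Lebesgue integral over an interval. -/
lemma setTrans (f : ℝ → ℝ≥0∞) (a b c : ℝ) :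
    ∫⁻ x in Ioo a b, f (x - c) = ∫⁻ x in Ioo (a - c) (b - c), f x := by
  have h1 : ∀ x : ℝ, (Ioo a b).indicator (fun y => f (y - c)) x
      = (Ioo (a - c) (b - c)).indicator f (x - c) := by
    intro x
    have hiff : x - c ∈ Ioo (a - c) (b - c) ↔ x ∈ Ioo a b := by
      simp only [mem_Ioo]
      constructor <;> rintro ⟨hh1, hh2⟩ <;> constructor <;> linarith
    by_cases hx : x ∈ Ioo a b
    · rw [indicator_of_mem hx, indicator_of_mem (hiff.2 hx)]
    · rw [indicator_of_notMem hx, indicator_of_notMem (fun hc' => hx (hiff.1 hc'))]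
  rw [← lintegral_indicator measurableSet_Ioo, ← lintegral_indicator measurableSet_Ioo]
  calc ∫⁻ x, (Ioo a b).indicator (fun y => f (y - c)) x
      = ∫⁻ x, (Ioo (a - c) (b - c)).indicator f (x - c) := by simp_rw [h1]
    _ = ∫⁻ x, (Ioo (a - c) (b - c)).indicator f x :=
        lintegral_sub_right_eq_self ((Ioo (a - c) (b - c)).indicator f) c

variable {μ : ℝ → ℝ≥0}

lemma mu_even (hA : ASU 0 μ) (x : ℝ) : μ (-x) = μ x := by
  have := hA.1 x
  simpa using this

/-- Key unimodality inequality: shifting away from the mode decreases the density. -/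
lemma lemA (hA : ASU 0 μ) {σ x : ℝ} (hσ : 0 ≤ σ) (hx : x ≤ σ / 2) :
    μ (x - σ) ≤ μ x := by
  have hm := hA.2.1
  rcases le_or_gt x 0 with h0 | h0
  · exact hm (mem_Iic.2 (by linarith)) (mem_Iic.2 h0) (by linarith)
  · have h1 : μ (x - σ) ≤ μ (-x) :=
      hm (mem_Iic.2 (by linarith)) (mem_Iic.2 (by linarith)) (by linarith)
    calc μ (x - σ) ≤ μ (-x) := h1
      _ = μ x := mu_even hA x

/-- The mass of a symmetric interval decreases as it is shifted away from the origin. -/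
lemma intervalLemma (hA : ASU 0 μ) {r t1 t2 : ℝ} (hr : 0 ≤ r) (h1 : 0 ≤ t1) (h12 : t1 ≤ t2) :
    ∫⁻ x in Ioo (-r - t2) (r - t2), (μ x : ℝ≥0∞)
      ≤ ∫⁻ x in Ioo (-r - t1) (r - t1), (μ x : ℝ≥0∞) := by
  rcases eq_or_lt_of_le h12 with rfl | hlt
  · exact le_rfl
  set s := t2 - t1 with hs
  have hs0 : 0 < s := by simp [hs]; linarith
  set l := -r - t1 with hl
  set u := r - t1 with hu
  have hul : u - l = 2 * r := by simp [hu, hl]; ring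
  have hEq : Ioo (-r - t2) (r - t2) = Ioo (l - s) (u - s) := by
    congr 1 <;> simp [hl, hu, hs] <;> ring
  rw [hEq]
  have htrans : ∫⁻ x in Ioo (l - s) (u - s), (μ x : ℝ≥0∞)
      = ∫⁻ x in Ioo l u, (μ (x - s) : ℝ≥0∞) := (setTrans (fun x => (μ x : ℝ≥0∞)) l u s).symm
  rcases le_or_gt (2 * r) s with hcase | hcase
  · -- big shift: pointwise comparison on all of `Ioo l u`
    rw [htrans]
    apply setLIntegral_mono' measurableSet_Ioo
    intro x hx
    have hxr : x ≤ s / 2 := by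
      have : x < u := hx.2
      have : x < r := by simp [hu] at *; linarith
      linarith
    exact_mod_cast ENNReal.coe_le_coe.2 (lemA hA hs0.le hxr)
  · -- small shift: split the intervals
    have hlus : l < u - s := by simp [hl, hu]; linarith
    have hlsl : l - s < l := by linarith
    have husu : u - s < u := by linarith
    have split2 : Ioo (l - s) (u - s) = Ioo (l - s) l ∪ Ico l (u - s) := by
      ext x
      simp only [mem_Ioo, mem_Ico, mem_union]
      constructor
      · rintro ⟨hx1, hx2⟩
        rcases lt_or_ge x l with hc | hc
        · exact Or.inl ⟨hx1, hc⟩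
        · exact Or.inr ⟨hc, hx2⟩
      · rintro (⟨hx1, hx2⟩ | ⟨hx1, hx2⟩) <;> exact ⟨by linarith, by linarith⟩
    have split1 : Ioo l u = Ioo l (u - s) ∪ Ico (u - s) u := by
      ext x
      simp only [mem_Ioo, mem_Ico, mem_union]
      constructor
      · rintro ⟨hx1, hx2⟩
        rcases lt_or_ge x (u - s) with hc | hc
        · exact Or.inl ⟨hx1, hc⟩
        · exact Or.inr ⟨hc, hx2⟩
      · rintro (⟨hx1, hx2⟩ | ⟨hx1, hx2⟩) <;> exact ⟨by linarith, by linarith⟩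
    have hdisj2 : Disjoint (Ioo (l - s) l) (Ico l (u - s)) := by
      rw [Set.disjoint_left]
      rintro x ⟨_, hx2⟩ ⟨hx3, _⟩
      linarith
    have hdisj1 : Disjoint (Ioo l (u - s)) (Ico (u - s) u) := by
      rw [Set.disjoint_left]
      rintro x ⟨_, hx2⟩ ⟨hx3, _⟩
      linarith
    rw [split2, split1, lintegral_union measurableSet_Ico hdisj2,
      lintegral_union measurableSet_Ico hdisj1]
    rw [add_comm (∫⁻ x in Ioo (l - s) l, (μ x : ℝ≥0∞))]
    gcongr ?_ + ?_
    · -- Ico = Ioo up to null sets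
      exact le_of_eq (setLIntegral_congr (Ioo_ae_eq_Ico.symm))
    · -- left tail of shifted interval vs right tail of original
      have e1 : ∫⁻ x in Ioo (l - s) l, (μ x : ℝ≥0∞)
          = ∫⁻ x in Ioo (u - s) u, (μ (x - 2 * r) : ℝ≥0∞) := by
        rw [setTrans (fun x => (μ x : ℝ≥0∞)) (u - s) u (2 * r)]
        congr 1 <;> · simp [hl, hu]; ring
      rw [e1]
      have : ∫⁻ x in Ioo (u - s) u, (μ (x - 2 * r) : ℝ≥0∞)
          ≤ ∫⁻ x in Ioo (u - s) u, (μ x : ℝ≥0∞) := by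
        apply setLIntegral_mono' measurableSet_Ioo
        intro x hx
        have hxr : x ≤ 2 * r / 2 := by
          have : x < u := hx.2
          simp [hu] at this ⊢; linarith
        exact_mod_cast ENNReal.coe_le_coe.2 (lemA hA (by linarith) hxr)
      calc ∫⁻ x in Ioo (u - s) u, (μ (x - 2 * r) : ℝ≥0∞)
          ≤ ∫⁻ x in Ioo (u - s) u, (μ x : ℝ≥0∞) := this
        _ ≤ ∫⁻ x in Ico (u - s) u, (μ x : ℝ≥0∞) :=
            le_of_eq (setLIntegral_congr Ioo_ae_eq_Ico)

/-- Per-level-set monotonicity: the `μ`-weighted measure of the level set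
`{w | c < h (t + w)}` is nondecreasing in `t ≥ 0`. -/
lemma levelCore (hμ : IsPdf μ) (hA : ASU 0 μ) {h : ℝ → ℝ≥0∞} (hmeas : Measurable h)
    (heven : ∀ x, h (-x) = h x) (hmono : MonotoneOn h (Ici (0 : ℝ))) (c : ℝ≥0∞)
    {t1 t2 : ℝ} (h1 : 0 ≤ t1) (h12 : t1 ≤ t2) :
    (volume.withDensity (fun w => (μ w : ℝ≥0∞))) {w | c < h (t1 + w)}
      ≤ (volume.withDensity (fun w => (μ w : ℝ≥0∞))) {w | c < h (t2 + w)} := by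
  set ν := volume.withDensity (fun w => (μ w : ℝ≥0∞)) with hν
  have hν_univ : ν univ = 1 := by
    rw [hν, withDensity_apply _ MeasurableSet.univ, Measure.restrict_univ]
    exact hμ.2
  have hν_sing : ∀ x : ℝ, ν {x} = 0 := fun x => by
    rw [hν, withDensity_apply _ (measurableSet_singleton x)]
    exact setLIntegral_measure_zero _ _ (measure_singleton x)
  set T : Set ℝ := {x | h x ≤ c} with hT
  have hTmeas : MeasurableSet T := measurableSet_le hmeas measurable_const
  have hTsym : ∀ x, x ∈ T → -x ∈ T := by
    intro x hx
    simp only [hT, mem_setOf_eq, heven] at hx ⊢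
    exact hx
  have hTdown : ∀ x y : ℝ, 0 ≤ x → x ≤ y → y ∈ T → x ∈ T := fun x y hx hxy hy =>
    le_trans (hmono (mem_Ici.2 hx) (mem_Ici.2 (hx.trans hxy)) hxy) hy
  have key : ν {w | t2 + w ∈ T} ≤ ν {w | t1 + w ∈ T} := by
    rcases eq_empty_or_nonempty T with hTe | ⟨y, hy⟩
    · have h2 : {w : ℝ | t2 + w ∈ T} = ∅ := by
        ext w; simp [hTe]
      have h1' : {w : ℝ | t1 + w ∈ T} = ∅ := by
        ext w; simp [hTe]
      rw [h2, h1']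
    · have h0T : (0 : ℝ) ∈ T := by
        rcases le_total 0 y with hy0 | hy0
        · exact hTdown 0 y le_rfl hy0 hy
        · exact hTdown 0 (-y) le_rfl (by linarith) (hTsym y hy)
      by_cases hbdd : BddAbove T
      · set r := sSup T with hrdef
        have hr0 : 0 ≤ r := le_csSup hbdd h0T
        have hsub1 : T ⊆ Icc (-r) r := by
          intro x hx
          constructor
          · have := le_csSup hbdd (hTsym x hx); linarith
          · exact le_csSup hbdd hx
        have hsub2 : Ioo (-r) r ⊆ T := by
          intro z hz
          have hzr : |z| < r := abs_lt.2 ⟨hz.1, hz.2⟩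
          obtain ⟨y', hy'T, hy'⟩ := exists_lt_of_lt_csSup ⟨0, h0T⟩ hzr
          have habs : |z| ∈ T := hTdown _ _ (abs_nonneg z) hy'.le hy'T
          rcases le_total 0 z with hz0 | hz0
          · rwa [abs_of_nonneg hz0] at habs
          · have := hTsym _ habs
            rwa [abs_of_nonpos hz0, neg_neg] at this
        have hν_eq : ∀ t : ℝ,
            ν {w | t + w ∈ T} = ∫⁻ x in Ioo (-r - t) (r - t), (μ x : ℝ≥0∞) := by
          intro t
          have hIoo : ν (Ioo (-r - t) (r - t)) = ∫⁻ x in Ioo (-r - t) (r - t), (μ x : ℝ≥0∞) :=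
            withDensity_apply _ measurableSet_Ioo
          have hIcc : ν (Icc (-r - t) (r - t)) = ν (Ioo (-r - t) (r - t)) :=
            (measure_congr (Ioo_ae_eq_Icc' (hν_sing _) (hν_sing _))).symm
          apply le_antisymm
          · rw [← hIoo, ← hIcc]
            apply measure_mono
            intro w hw
            have hmem := hsub1 hw
            simp only [mem_Icc] at hmem ⊢
            constructor <;> linarith [hmem.1, hmem.2]
          · rw [← hIoo]
            apply measure_mono
            intro w hw
            have : t + w ∈ Ioo (-r) r := by
              simp only [mem_Ioo] at hw ⊢
              constructor <;> linarith [hw.1, hw.2]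
            exact hsub2 this
        rw [hν_eq t1, hν_eq t2]
        exact intervalLemma hA hr0 h1 h12
      · have hall : ∀ x : ℝ, 0 ≤ x → x ∈ T := by
          intro x hx
          obtain ⟨y', hy'T, hy'⟩ := not_bddAbove_iff.1 hbdd x
          exact hTdown x y' hx hy'.le hy'T
        have h2 : {w : ℝ | t2 + w ∈ T} = univ := by
          ext w; simp only [mem_setOf_eq, mem_univ, iff_true]
          rcases le_total 0 (t2 + w) with hx | hx
          · exact hall _ hx
          · have := hTsym _ (hall (-(t2 + w)) (by linarith)); rwa [neg_neg] at this
        have h1' : {w : ℝ | t1 + w ∈ T} = univ := by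
          ext w; simp only [mem_setOf_eq, mem_univ, iff_true]
          rcases le_total 0 (t1 + w) with hx | hx
          · exact hall _ hx
          · have := hTsym _ (hall (-(t1 + w)) (by linarith)); rwa [neg_neg] at this
        rw [h2, h1']
  have hcomp : ∀ t : ℝ, {w : ℝ | c < h (t + w)} = {w : ℝ | t + w ∈ T}ᶜ := by
    intro t; ext w
    simp only [hT, mem_setOf_eq, mem_compl_iff, not_le]
  have hmeasA : ∀ t : ℝ, MeasurableSet {w : ℝ | t + w ∈ T} := fun t =>
    hTmeas.preimage (measurable_id.const_add t)
  have hfin : ∀ t : ℝ, ν {w | t + w ∈ T} ≠ ∞ := by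
    intro t hcontr
    have := measure_mono (μ := ν) (subset_univ {w : ℝ | t + w ∈ T})
    rw [hcontr, hν_univ] at this
    exact (not_le.2 (by norm_num : (1 : ℝ≥0∞) < ∞)) this
  have hsum : ∀ t : ℝ, ν {w | t + w ∈ T}ᶜ = 1 - ν {w | t + w ∈ T} := by
    intro t
    have := measure_add_measure_compl (μ := ν) (hmeasA t)
    rw [hν_univ] at this
    exact ENNReal.eq_sub_of_add_eq (hfin t) (by rw [add_comm]; exact this)
  rw [hcomp t1, hcomp t2, hsum t1, hsum t2]
  exact tsub_le_tsub_left key 1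

/-- Layer-cake representation of the weighted integral. -/
lemma rep (hμ : IsPdf μ) {h : ℝ → ℝ≥0∞} (hmeas : Measurable h) (t : ℝ) :
    ∫⁻ w, h (t + w) * (μ w : ℝ≥0∞)
      = ∫⁻ s in Ioi (0 : ℝ),
          (volume.withDensity (fun w => (μ w : ℝ≥0∞))) {w | ENNReal.ofReal s < h (t + w)} := by
  have hkey : ∀ c : ℝ≥0∞, volume ({s : ℝ | ENNReal.ofReal s < c} ∩ Ioi 0) = c := by
    intro c
    rcases eq_or_ne c ⊤ with rfl | hc
    · have huniv : {s : ℝ | ENNReal.ofReal s < ⊤} = univ :=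
        eq_univ_of_forall fun s => ENNReal.ofReal_lt_top
      rw [huniv, univ_inter, Real.volume_Ioi]
    · have hseteq : {s : ℝ | ENNReal.ofReal s < c} ∩ Ioi 0 = Ioo 0 c.toReal := by
        ext s'
        simp only [mem_inter_iff, mem_setOf_eq, mem_Ioi, mem_Ioo]
        constructor
        · rintro ⟨hs1, hs2⟩
          exact ⟨hs2, (ENNReal.ofReal_lt_iff_lt_toReal hs2.le hc).1 hs1⟩
        · rintro ⟨hs1, hs2⟩
          exact ⟨(ENNReal.ofReal_lt_iff_lt_toReal hs1.le hc).2 hs2, hs1⟩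
      rw [hseteq, Real.volume_Ioo, sub_zero, ENNReal.ofReal_toReal hc]
  set g : ℝ × ℝ → ℝ≥0∞ :=
    fun p => if ENNReal.ofReal p.2 < h (t + p.1) then (μ p.1 : ℝ≥0∞) else 0 with hg
  have hset : MeasurableSet {p : ℝ × ℝ | ENNReal.ofReal p.2 < h (t + p.1)} :=
    measurableSet_lt (ENNReal.measurable_ofReal.comp measurable_snd)
      (hmeas.comp (measurable_fst.const_add t))
  have hgmeas : Measurable g :=
    Measurable.ite hset (measurable_coe_nnreal_ennreal.comp (hμ.1.comp measurable_fst))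
      measurable_const
  have inner1 : ∀ w : ℝ, ∫⁻ s in Ioi (0 : ℝ), g (w, s) = h (t + w) * (μ w : ℝ≥0∞) := by
    intro w
    have hSmeas : MeasurableSet {s : ℝ | ENNReal.ofReal s < h (t + w)} :=
      measurableSet_lt ENNReal.measurable_ofReal measurable_const
    have hfe : (fun s => g (w, s))
        = ({s : ℝ | ENNReal.ofReal s < h (t + w)}).indicator (fun _ => (μ w : ℝ≥0∞)) := by
      funext s
      simp only [hg, indicator_apply, mem_setOf_eq]
    rw [hfe, lintegral_indicator hSmeas, setLIntegral_const,
      Measure.restrict_apply hSmeas, hkey (h (t + w)), mul_comm]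
  have inner2 : ∀ s : ℝ, ∫⁻ w, g (w, s)
      = (volume.withDensity (fun w => (μ w : ℝ≥0∞))) {w | ENNReal.ofReal s < h (t + w)} := by
    intro s
    have hAmeas : MeasurableSet {w : ℝ | ENNReal.ofReal s < h (t + w)} :=
      measurableSet_lt measurable_const (hmeas.comp (measurable_id.const_add t))
    rw [withDensity_apply _ hAmeas, ← lintegral_indicator hAmeas]
    apply lintegral_congr
    intro w
    simp only [hg, indicator_apply, mem_setOf_eq]
  calc ∫⁻ w, h (t + w) * (μ w : ℝ≥0∞)
      = ∫⁻ w, ∫⁻ s in Ioi (0 : ℝ), g (w, s) := lintegral_congr fun w => (inner1 w).symm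
    _ = ∫⁻ s in Ioi (0 : ℝ), ∫⁻ w, g (w, s) := lintegral_lintegral_swap hgmeas.aemeasurable
    _ = _ := lintegral_congr fun s => inner2 s

/-- Monotonicity of the smoothed integral in the (nonnegative) shift. -/
lemma Fmono (hμ : IsPdf μ) (hA : ASU 0 μ) {h : ℝ → ℝ≥0∞} (hmeas : Measurable h)
    (heven : ∀ x, h (-x) = h x) (hmono : MonotoneOn h (Ici (0 : ℝ)))
    {t1 t2 : ℝ} (h1 : 0 ≤ t1) (h12 : t1 ≤ t2) :
    ∫⁻ w, h (t1 + w) * (μ w : ℝ≥0∞) ≤ ∫⁻ w, h (t2 + w) * (μ w : ℝ≥0∞) := by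
  rw [rep hμ hmeas t1, rep hμ hmeas t2]
  exact lintegral_mono fun s => levelCore hμ hA hmeas heven hmono _ h1 h12

/-- Evenness of the smoothed integral in the shift. -/
lemma Feven (hA : ASU 0 μ) {h : ℝ → ℝ≥0∞} (heven : ∀ x, h (-x) = h x) (t : ℝ) :
    ∫⁻ w, h (-t + w) * (μ w : ℝ≥0∞) = ∫⁻ w, h (t + w) * (μ w : ℝ≥0∞) := by
  have hneg : ∫⁻ w, h (-t + w) * (μ w : ℝ≥0∞) = ∫⁻ w, h (-t + -w) * (μ (-w) : ℝ≥0∞) := by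
    have hmap := lintegral_map_equiv (μ := (volume : Measure ℝ)) (fun w => h (-t + w) * (μ w : ℝ≥0∞))
      (MeasurableEquiv.neg ℝ)
    have hcoe : ⇑(MeasurableEquiv.neg ℝ) = fun x : ℝ => -x := rfl
    rw [hcoe, show (Measure.map (fun x : ℝ => -x) volume) = volume from
      Measure.map_neg_eq_self (volume : Measure ℝ)] at hmap
    simpa using hmap
  rw [hneg]
  apply lintegral_congr
  intro w
  rw [show -t + -w = -(t + w) by ring, heven, mu_even hA]

end Stmt13Aux

/-- Monotone-expectation property: for an ASU(0) noise density `μ` and any measurable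
`h : ℝ → [0,∞]` that is even and nondecreasing on `[0,∞)`, the function
`H(e) = ∫ h(ae + w) μ(w) dw` is even and nondecreasing on `[0, ∞)`. -/
theorem stmt13 (μ : ℝ → ℝ≥0) (hμ : IsPdf μ) (hA : ASU 0 μ) (a : ℝ)
    (h : ℝ → ℝ≥0∞) (hmeas : Measurable h) (heven : ∀ x, h (-x) = h x)
    (hmono : MonotoneOn h (Ici (0 : ℝ))) :
    (∀ e : ℝ, (∫⁻ w, h (a * (-e) + w) * (μ w : ℝ≥0∞)) =
      ∫⁻ w, h (a * e + w) * (μ w : ℝ≥0∞)) ∧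
    MonotoneOn (fun e => ∫⁻ w, h (a * e + w) * (μ w : ℝ≥0∞)) (Ici (0 : ℝ)) := by
  constructor
  · intro e
    simp only [mul_neg]
    exact Stmt13Aux.Feven hA heven (a * e)
  · intro e1 he1 e2 he2 hle
    simp only
    rcases le_total 0 a with ha | ha
    · exact Stmt13Aux.Fmono hμ hA hmeas heven hmono (mul_nonneg ha (mem_Ici.1 he1))
        (mul_le_mul_of_nonneg_left hle ha)
    · have k1 : ∫⁻ w, h (a * e1 + w) * (μ w : ℝ≥0∞)
          = ∫⁻ w, h (-a * e1 + w) * (μ w : ℝ≥0∞) := by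
        rw [show -a * e1 = -(a * e1) by ring]
        exact (Stmt13Aux.Feven hA heven (a * e1)).symm
      have k2 : ∫⁻ w, h (a * e2 + w) * (μ w : ℝ≥0∞)
          = ∫⁻ w, h (-a * e2 + w) * (μ w : ℝ≥0∞) := by
        rw [show -a * e2 = -(a * e2) by ring]
        exact (Stmt13Aux.Feven hA heven (a * e2)).symm
      rw [k1, k2]
      exact Stmt13Aux.Fmono hμ hA hmeas heven hmono
        (mul_nonneg (neg_nonneg.2 ha) (mem_Ici.1 he1))
        (mul_le_mul_of_nonneg_left hle (neg_nonneg.2 ha))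
end
end

section
/- Fix T ∈ ℕ, λ ∈ [0, ∞), a ∈ ℝ, a row-stochastic matrix Q : {0,1} → {0,1} → [0,1] (Q s 0 + Q s 1 = 1), a pdf μ on ℝ that is ASU(0), and a measurable d : ℝ → [0, ∞) that is even and nondecreasing on [0, ∞). Define J_t, J⁰_t, J¹_t : ℝ × {0,1} → [0, ∞] by J_{T+1}(e, s) = 0 and, for t = T, …, 0: J⁰_t(e, s) = d(e) + Q s 0 · ∫ J_{t+1}(ae + w, 0) μ(w) dw + Q s 1 · ∫ J_{t+1}(ae + w, 1) μ(w) dw; J¹_t(e, s) = λ + Q s 0 · d(e) + Q s 0 · ∫ J_{t+1}(ae + w, 0) μ(w) dw + Q s 1 · ∫ J_{t+1}(w, 1) μ(w) dw; J_t(e, s) = min{J⁰_t(e, s), J¹_t(e, s)}. Then for every t ∈ {0, …, T+1} and every s ∈ {0,1}, the functions e ↦ J_t(e, s), e ↦ J⁰_t(e, s) and e ↦ J¹_t(e, s) are even and nondecreasing on [0, ∞). -/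
open MeasureTheory Set
open scoped ENNReal NNReal

noncomputable section

namespace Stmt17Aux

/-- Even, nondecreasing in `|·|`, and measurable. -/
structure Nice (f : ℝ → ℝ≥0∞) : Prop where
  even : ∀ e, f (-e) = f e
  mono : MonotoneOn f (Ici (0 : ℝ))
  meas : Measurable f

lemma apply_abs {β : Type*} {f : ℝ → β} (he : ∀ x, f (-x) = f x) (x : ℝ) :
    f |x| = f x := by
  rcases abs_choice x with h | h
  · rw [h]
  · rw [h, he]

lemma le_of_abs_le_mono {f : ℝ → ℝ≥0∞} (he : ∀ x, f (-x) = f x)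
    (hm : MonotoneOn f (Ici (0 : ℝ))) {x y : ℝ} (h : |x| ≤ |y|) : f x ≤ f y := by
  rw [← apply_abs he x, ← apply_abs he y]
  exact hm (abs_nonneg x) (abs_nonneg y) h

lemma le_of_abs_le_anti {f : ℝ → ℝ≥0} (he : ∀ x, f (-x) = f x)
    (hm : AntitoneOn f (Ici (0 : ℝ))) {x y : ℝ} (h : |x| ≤ |y|) : f y ≤ f x := by
  rw [← apply_abs he x, ← apply_abs he y]
  exact hm (abs_nonneg x) (abs_nonneg y) h

lemma cheb {A B p q : ℝ≥0∞} (hAB : A ≤ B) (hqp : q ≤ p) :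
    A * p + B * q ≤ B * p + A * q := by
  obtain ⟨D, rfl⟩ := exists_add_of_le hAB
  obtain ⟨r, rfl⟩ := exists_add_of_le hqp
  have h : (A + D) * (q + r) + A * q = (A * (q + r) + (A + D) * q) + D * r := by ring
  rw [h]
  exact le_self_add

lemma nice_const (c : ℝ≥0∞) : Nice (fun _ => c) :=
  ⟨fun _ => rfl, fun _ _ _ _ _ => le_rfl, measurable_const⟩

lemma nice_add {f g : ℝ → ℝ≥0∞} (hf : Nice f) (hg : Nice g) :
    Nice (fun e => f e + g e) :=
  ⟨fun e => by rw [hf.even, hg.even],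
   fun x hx y hy h => add_le_add (hf.mono hx hy h) (hg.mono hx hy h),
   hf.meas.add hg.meas⟩

lemma nice_mul_const {f : ℝ → ℝ≥0∞} (c : ℝ≥0∞) (hf : Nice f) :
    Nice (fun e => c * f e) :=
  ⟨fun e => by rw [hf.even],
   fun x hx y hy h => mul_le_mul_right (hf.mono hx hy h) c,
   hf.meas.const_mul c⟩

lemma nice_mul_const_right {f : ℝ → ℝ≥0∞} (c : ℝ≥0∞) (hf : Nice f) :
    Nice (fun e => f e * c) :=
  ⟨fun e => by rw [hf.even],
   fun x hx y hy h => mul_le_mul_left (hf.mono hx hy h) c,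
   hf.meas.mul_const c⟩

lemma nice_min {f g : ℝ → ℝ≥0∞} (hf : Nice f) (hg : Nice g) :
    Nice (fun e => min (f e) (g e)) :=
  ⟨fun e => by rw [hf.even, hg.even],
   fun x hx y hy h => le_min ((min_le_left _ _).trans (hf.mono hx hy h))
      ((min_le_right _ _).trans (hg.mono hx hy h)),
   hf.meas.min hg.meas⟩

/-- The key analytic lemma: convolution-type integrals against a symmetric unimodal
density preserve the `Nice` property. -/
lemma shiftNice {μ : ℝ → ℝ≥0} (hμm : Measurable μ) (hμe : ∀ x, μ (-x) = μ x)
    (hμa : AntitoneOn μ (Ici (0 : ℝ))) {g : ℝ → ℝ≥0∞} (hg : Nice g) (a : ℝ) :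
    Nice (fun e => ∫⁻ w, g (a * e + w) * (μ w : ℝ≥0∞)) := by
  set G : ℝ → ℝ≥0∞ := fun c => ∫⁻ w, g (c + w) * (μ w : ℝ≥0∞) with hG
  have Geven : ∀ c, G (-c) = G c := by
    intro c
    have hmp : MeasurePreserving (⇑(MeasurableEquiv.neg ℝ)) (volume : Measure ℝ) volume :=
      Measure.measurePreserving_neg _
    calc G (-c) = ∫⁻ w, g (-c + (MeasurableEquiv.neg ℝ) w) * (μ ((MeasurableEquiv.neg ℝ) w) : ℝ≥0∞) :=
          hmp.lintegral_map_equiv _ (MeasurableEquiv.neg ℝ)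
      _ = G c := by
          refine lintegral_congr fun w => ?_
          show g (-c + -w) * (μ (-w) : ℝ≥0∞) = g (c + w) * (μ w : ℝ≥0∞)
          rw [hμe, show -c + -w = -(c + w) by ring, hg.even]
  have hgm : ∀ c : ℝ, Measurable fun w => g (c + w) * (μ w : ℝ≥0∞) := fun c =>
    (hg.meas.comp (measurable_const.add measurable_id)).mul
      (measurable_coe_nnreal_ennreal.comp hμm)
  have Gmono : MonotoneOn G (Ici (0 : ℝ)) := by
    intro c1 hc1 c2 hc2 h12
    simp only [mem_Ici] at hc1 hc2
    set m : ℝ := (c1 + c2) / 2 with hm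
    set e : ℝ ≃ᵐ ℝ := MeasurableEquiv.subLeft (-(2 * m)) with he
    have hmp : MeasurePreserving (⇑e) (volume : Measure ℝ) volume :=
      Measure.measurePreserving_sub_left volume _
    have hpre : (⇑e) ⁻¹' (Iic (-m)) = Ici (-m) := by
      ext w
      show -(2 * m) - w ≤ -m ↔ w ∈ Ici (-m)
      simp only [mem_Ici]
      constructor <;> intro h <;> linarith
    have split : ∀ c : ℝ, G c = ∫⁻ w in Ici (-m),
        (g (c + w) * (μ w : ℝ≥0∞) + g (c + (-(2 * m) - w)) * (μ (-(2 * m) - w) : ℝ≥0∞)) := by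
      intro c
      have h1 : G c = (∫⁻ w in Ioi (-m), g (c + w) * (μ w : ℝ≥0∞))
          + ∫⁻ w in Iic (-m), g (c + w) * (μ w : ℝ≥0∞) := by
        rw [show Iic (-m) = (Ioi (-m))ᶜ from compl_Ioi.symm]
        exact (lintegral_add_compl _ measurableSet_Ioi).symm
      have h2 : ∫⁻ w in Iic (-m), g (c + w) * (μ w : ℝ≥0∞)
          = ∫⁻ w in Ici (-m), g (c + (-(2 * m) - w)) * (μ (-(2 * m) - w) : ℝ≥0∞) := by
        calc ∫⁻ w in Iic (-m), g (c + w) * (μ w : ℝ≥0∞)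
            = ∫⁻ w, g (c + w) * (μ w : ℝ≥0∞)
                ∂((Measure.map (⇑e) volume).restrict (Iic (-m))) := by rw [hmp.map_eq]
          _ = ∫⁻ w, g (c + w) * (μ w : ℝ≥0∞)
                ∂(Measure.map (⇑e) (volume.restrict ((⇑e) ⁻¹' Iic (-m)))) := by
                rw [Measure.restrict_map e.measurable measurableSet_Iic]
          _ = ∫⁻ w in (⇑e) ⁻¹' Iic (-m), g (c + e w) * (μ (e w) : ℝ≥0∞) :=
                lintegral_map_equiv _ e
          _ = ∫⁻ w in Ici (-m), g (c + (-(2 * m) - w)) * (μ (-(2 * m) - w) : ℝ≥0∞) := by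
                rw [hpre]
                rfl
      have h3 : ∫⁻ w in Ioi (-m), g (c + w) * (μ w : ℝ≥0∞)
          = ∫⁻ w in Ici (-m), g (c + w) * (μ w : ℝ≥0∞) := setLIntegral_congr Ioi_ae_eq_Ici
      rw [h1, h2, h3, ← lintegral_add_left (hgm c)]
    rw [split c1, split c2]
    refine setLIntegral_mono' measurableSet_Ici fun w hw => ?_
    simp only [mem_Ici] at hw
    have e1 : g (c1 + (-(2 * m) - w)) = g (c2 + w) := by
      rw [show c1 + (-(2 * m) - w) = -(c2 + w) by rw [hm]; ring, hg.even]
    have e2 : g (c2 + (-(2 * m) - w)) = g (c1 + w) := by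
      rw [show c2 + (-(2 * m) - w) = -(c1 + w) by rw [hm]; ring, hg.even]
    have e3 : μ (-(2 * m) - w) = μ (2 * m + w) := by
      rw [show -(2 * m) - w = -(2 * m + w) by ring, hμe]
    rw [e1, e2, e3]
    have hm0 : (0 : ℝ) ≤ m := by rw [hm]; linarith
    have habs1 : |c1 + w| ≤ |c2 + w| := by
      rw [abs_of_nonneg (by linarith : (0 : ℝ) ≤ c2 + w)]
      exact abs_le.mpr ⟨by linarith, by linarith⟩
    have habs2 : |w| ≤ |2 * m + w| := by
      rw [abs_of_nonneg (by linarith : (0 : ℝ) ≤ 2 * m + w)]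
      exact abs_le.mpr ⟨by linarith, by linarith⟩
    exact cheb (le_of_abs_le_mono hg.even hg.mono habs1)
      (ENNReal.coe_le_coe.2 (le_of_abs_le_anti hμe hμa habs2))
  have Gnice : Nice G := by
    refine ⟨Geven, Gmono, ?_⟩
    have hmeas2 : Measurable (fun p : ℝ × ℝ => g (p.1 + p.2) * (μ p.2 : ℝ≥0∞)) :=
      (hg.meas.comp (measurable_fst.add measurable_snd)).mul
        (measurable_coe_nnreal_ennreal.comp (hμm.comp measurable_snd))
    exact hmeas2.lintegral_prod_right'
  refine ⟨?_, ?_, ?_⟩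
  · intro x
    show G (a * -x) = G (a * x)
    rw [show a * -x = -(a * x) by ring, Geven]
  · intro x hx y hy hxy
    simp only [mem_Ici] at hx hy
    have : |a * x| ≤ |a * y| := by
      rw [abs_mul, abs_mul, abs_of_nonneg hx, abs_of_nonneg hy]
      exact mul_le_mul_of_nonneg_left hxy (abs_nonneg a)
    exact le_of_abs_le_mono Geven Gmono this
  · have hmeas2 : Measurable (fun p : ℝ × ℝ => g (a * p.1 + p.2) * (μ p.2 : ℝ≥0∞)) :=
      (hg.meas.comp ((measurable_fst.const_mul a).add measurable_snd)).mul
        (measurable_coe_nnreal_ennreal.comp (hμm.comp measurable_snd))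
    exact hmeas2.lintegral_prod_right'

end Stmt17Aux

open Stmt17Aux in
/-- The value functions of the finite-horizon dynamic program (dp-J0)–(dp-J2) are
even in the error `e` and nondecreasing in `|e|`. -/
theorem stmt17
    (T : ℕ) (lam : ℝ≥0) (a : ℝ)
    (Q : Bool → Bool → ℝ≥0) (hQ : ∀ s, Q s false + Q s true = 1)
    (μ : ℝ → ℝ≥0) (hμ : IsPdf μ) (hμA : ASU 0 μ)
    (d : ℝ → ℝ≥0) (hd : Measurable d) (hdeven : ∀ e, d (-e) = d e)
    (hdmono : MonotoneOn d (Ici (0 : ℝ)))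
    (J J0 J1 : ℕ → ℝ → Bool → ℝ≥0∞)
    (hJT : ∀ e s, J (T + 1) e s = 0)
    (hJ0 : ∀ t ≤ T, ∀ e s, J0 t e s =
      (d e : ℝ≥0∞)
      + (Q s false : ℝ≥0∞) * ∫⁻ w, J (t + 1) (a * e + w) false * (μ w : ℝ≥0∞)
      + (Q s true : ℝ≥0∞) * ∫⁻ w, J (t + 1) (a * e + w) true * (μ w : ℝ≥0∞))
    (hJ1 : ∀ t ≤ T, ∀ e s, J1 t e s =
      (lam : ℝ≥0∞) + (Q s false : ℝ≥0∞) * (d e : ℝ≥0∞)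
      + (Q s false : ℝ≥0∞) * ∫⁻ w, J (t + 1) (a * e + w) false * (μ w : ℝ≥0∞)
      + (Q s true : ℝ≥0∞) * ∫⁻ w, J (t + 1) w true * (μ w : ℝ≥0∞))
    (hJ : ∀ t ≤ T, ∀ e s, J t e s = min (J0 t e s) (J1 t e s)) :
    (∀ t ≤ T + 1, ∀ s,
      (∀ e, J t (-e) s = J t e s) ∧ MonotoneOn (fun e => J t e s) (Ici (0 : ℝ))) ∧
    (∀ t ≤ T, ∀ s,
      ((∀ e, J0 t (-e) s = J0 t e s) ∧ MonotoneOn (fun e => J0 t e s) (Ici (0 : ℝ))) ∧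
      ((∀ e, J1 t (-e) s = J1 t e s) ∧ MonotoneOn (fun e => J1 t e s) (Ici (0 : ℝ)))) := by
  have hμeven : ∀ x, μ (-x) = μ x := by
    intro x
    have := hμA.1 x
    rw [zero_sub, zero_add] at this
    exact this
  have hμanti : AntitoneOn μ (Ici (0 : ℝ)) := hμA.2.2
  have niced : Nice (fun e => (d e : ℝ≥0∞)) :=
    ⟨fun e => by rw [hdeven],
     fun x hx y hy h => ENNReal.coe_le_coe.2 (hdmono hx hy h),
     measurable_coe_nnreal_ennreal.comp hd⟩
  have step : ∀ t, t ≤ T → (∀ s, Nice (fun e => J (t + 1) e s)) →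
      ∀ s, Nice (fun e => J0 t e s) ∧ Nice (fun e => J1 t e s) ∧ Nice (fun e => J t e s) := by
    intro t ht ih s
    have hint : ∀ s' : Bool, Nice (fun e => ∫⁻ w, J (t + 1) (a * e + w) s' * (μ w : ℝ≥0∞)) :=
      fun s' => shiftNice hμ.1 hμeven hμanti (ih s') a
    have hmeasJ : ∀ (s' : Bool) (c : ℝ),
        Measurable fun w => J (t + 1) (c + w) s' * (μ w : ℝ≥0∞) := fun s' c =>
      ((ih s').meas.comp (measurable_const.add measurable_id)).mul
        (measurable_coe_nnreal_ennreal.comp hμ.1)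
    have h0 : Nice (fun e => J0 t e s) := by
      have heq : (fun e => J0 t e s) = fun e =>
          (d e : ℝ≥0∞)
          + (Q s false : ℝ≥0∞) *
            ((∫⁻ w, J (t + 1) (a * e + w) false * (μ w : ℝ≥0∞))
              + ((Q s true : ℝ≥0∞) * ∫⁻ w, J (t + 1) (a * e + w) true * (μ w : ℝ≥0∞))
                * volume (univ : Set ℝ)) := by
        funext e
        rw [hJ0 t ht e s, lintegral_add_left (hmeasJ false (a * e)), lintegral_const]
      rw [heq]
      exact nice_add niced (nice_mul_const _
        (nice_add (hint false) (nice_mul_const_right _ (nice_mul_const _ (hint true)))))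
    have h1 : Nice (fun e => J1 t e s) := by
      have heq : (fun e => J1 t e s) = fun e =>
          (lam : ℝ≥0∞) + (Q s false : ℝ≥0∞) * (d e : ℝ≥0∞)
          + (Q s false : ℝ≥0∞) *
            ((∫⁻ w, J (t + 1) (a * e + w) false * (μ w : ℝ≥0∞))
              + ((Q s true : ℝ≥0∞) * ∫⁻ w, J (t + 1) w true * (μ w : ℝ≥0∞))
                * volume (univ : Set ℝ)) := by
        funext e
        rw [hJ1 t ht e s, lintegral_add_left (hmeasJ false (a * e)), lintegral_const]
      rw [heq]
      exact nice_add
        (nice_add (nice_const _) (nice_mul_const _ niced))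
        (nice_mul_const _ (nice_add (hint false) (nice_const _)))
    refine ⟨h0, h1, ?_⟩
    have heq : (fun e => J t e s) = fun e => min (J0 t e s) (J1 t e s) :=
      funext fun e => hJ t ht e s
    rw [heq]
    exact nice_min h0 h1
  have main : ∀ k t, t + k = T + 1 → ∀ s, Nice (fun e => J t e s) := by
    intro k
    induction k with
    | zero =>
      intro t ht s
      have htT : t = T + 1 := by omega
      subst htT
      have heq : (fun e => J (T + 1) e s) = fun _ => (0 : ℝ≥0∞) :=
        funext fun e => hJT e s
      rw [heq]
      exact nice_const _
    | succ k ih =>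
      intro t ht s
      have ht' : t ≤ T := by omega
      have hnext : ∀ s, Nice (fun e => J (t + 1) e s) := ih (t + 1) (by omega)
      exact (step t ht' hnext s).2.2
  constructor
  · intro t ht s
    obtain ⟨he, hmo, _⟩ := main (T + 1 - t) t (by omega) s
    exact ⟨he, hmo⟩
  · intro t ht s
    have hnext : ∀ s, Nice (fun e => J (t + 1) e s) := main (T - t) (t + 1) (by omega)
    obtain ⟨h0, h1, _⟩ := step t ht hnext s
    exact ⟨⟨h0.even, h0.mono⟩, ⟨h1.even, h1.mono⟩⟩
end
end
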